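/- arXiv:2605.23443 — 5 statements merged into one kernel-verified Lean document; each statement's English description precedes it below -/
import Mathlib

section
/- Let M and X be d×d complex matrices with X of rank k, and let M_k = M P where P is the orthogonal projection onto the column space (support) of X restricted so that M_k has rank at most k. Then the product of the k largest singular values of M_k X equals the product of the k largest singular values of M_k times the product of the k largest (i.e., all nonzero) singular values of X. -/
/-!
Write the projection as `P = U * Uᴴ` with `Uᴴ * U = 1`, `U : d × k`. Then `Mk = A * Uᴴ`,
`X = U * B` and `Mk * X = A * B` for `A = M * U`, `B = Uᴴ * X`. Whenever `Yᴴ * Y = L * R` with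
`L : d × k`, the characteristic polynomial of `Yᴴ * Y` is `t ^ (d - k)` times that of the `k × k`
matrix `R * L`, so the squares of the `k` largest singular values of `Y` multiply to
`det (R * L)`. For `X`, `Mk` and `Mk * X` this gives `det (B * Bᴴ)`, `det (Aᴴ * A)` and
`det (B * Bᴴ * Aᴴ * A)`, and the determinant is multiplicative.
-/

open Matrix ComplexOrder

/-- The (unordered) singular values of a square complex matrix `A`: the square roots
of the eigenvalues of `Aᴴ * A`. -/
noncomputable def singVal {d : ℕ} (A : Matrix (Fin d) (Fin d) ℂ) (i : Fin d) : ℝ :=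
  Real.sqrt (((Matrix.posSemidef_conjTranspose_mul_self A).isHermitian).eigenvalues i)

/-- `s` enumerates the singular values of `A` in non-increasing order. -/
def IsSortedSingVal {d : ℕ} (A : Matrix (Fin d) (Fin d) ℂ) (s : Fin d → ℝ) : Prop :=
  Antitone s ∧ ∃ σ : Equiv.Perm (Fin d), ∀ i, s i = singVal A (σ i)

section

open Polynomial

theorem Matrix.det_eq_prod_of_charpoly_eq {R n : Type*} [CommRing R] [Fintype n] [DecidableEq n]
    (A : Matrix n n R) (a : n → R) (h : A.charpoly = ∏ i, (X - C (a i))) :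
    A.det = ∏ i, a i := by
  rw [det_eq_sign_charpoly_coeff, h, coeff_zero_eq_eval_zero, eval_prod]
  simp only [eval_sub, eval_X, eval_C, zero_sub, Finset.prod_neg, Finset.card_univ, ← mul_assoc,
    ← mul_pow, neg_one_mul, neg_neg, one_pow, one_mul]

theorem prod_X_sub_C_eq_X_pow_mul_of_eq_zero {R : Type*} [CommRing R] {d k : ℕ} (hk : k ≤ d)
    (a : Fin d → R) (ha : ∀ i : Fin d, k ≤ (i : ℕ) → a i = 0) :
    ∏ i, (X - C (a i)) = X ^ (d - k) * ∏ i : Fin k, (X - C (a (Fin.castLE hk i))) := by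
  obtain ⟨n, rfl⟩ := Nat.exists_eq_add_of_le hk
  rw [Fin.prod_univ_add, mul_comm, Nat.add_sub_cancel_left]
  congr 1
  simp [ha]

end

theorem Matrix.mul_diagonal_mul_eq_submatrix {α m n p l : Type*} [Fintype n] [Fintype l]
    [NonUnitalNonAssocSemiring α] [DecidableEq n] [DecidableEq l]
    (V : Matrix m n α) (W : Matrix n p α) (g : n → α) {f : l → n} (hf : f.Injective)
    (hg : ∀ j ∉ Set.range f, g j = 0) :
    V * diagonal g * W = V.submatrix id f * diagonal (g ∘ f) * W.submatrix f id := by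
  ext i j
  rw [mul_apply, mul_apply]
  simp only [mul_diagonal, submatrix_apply, id, Function.comp_apply]
  exact (Fintype.sum_of_injective f hf _ _ (fun x hx => by simp [hg x hx]) fun _ => rfl).symm

theorem Matrix.IsHermitian.exists_isometry_diagonal_eq {𝕜 n : Type*} [RCLike 𝕜] [Fintype n]
    [DecidableEq n] {H : Matrix n n 𝕜} (hH : H.IsHermitian) {k : ℕ} (hr : H.rank = k) :
    ∃ (U : Matrix n (Fin k) 𝕜) (c : Fin k → ℝ), (∀ i, c i ≠ 0) ∧ Uᴴ * U = 1 ∧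
      H = U * diagonal (fun i => (c i : 𝕜)) * Uᴴ := by
  rw [hH.rank_eq_card_non_zero_eigs] at hr
  set e : Fin k ≃ {i // hH.eigenvalues i ≠ 0} := (Fintype.equivFinOfCardEq hr).symm
  set f : Fin k → n := fun i => e i
  have hf : f.Injective := Subtype.val_injective.comp e.injective
  set V : Matrix n n 𝕜 := ↑hH.eigenvectorUnitary
  refine ⟨V.submatrix id f, hH.eigenvalues ∘ f, fun i => (e i).2, ?_, ?_⟩
  · rw [conjTranspose_submatrix, ← submatrix_mul _ _ _ _ _ Function.bijective_id,
      ← star_eq_conjTranspose, Unitary.coe_star_mul_self, submatrix_one _ hf]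
  · have hzero : ∀ j ∉ Set.range f, (RCLike.ofReal (hH.eigenvalues j) : 𝕜) = 0 := by
      intro j hj
      by_contra hne
      exact hj ⟨e.symm ⟨j, by exact_mod_cast hne⟩, by simp [f]⟩
    calc H = V * diagonal (RCLike.ofReal ∘ hH.eigenvalues) * star V := hH.spectral_theorem
      _ = _ := mul_diagonal_mul_eq_submatrix _ _ _ hf hzero

theorem Matrix.IsHermitian.exists_isometry_mul_conjTranspose_eq {𝕜 n : Type*} [RCLike 𝕜]
    [Fintype n] [DecidableEq n] {P : Matrix n n 𝕜} (hP : P.IsHermitian) (hPP : P * P = P) {k : ℕ}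
    (hr : P.rank = k) : ∃ U : Matrix n (Fin k) 𝕜, Uᴴ * U = 1 ∧ U * Uᴴ = P := by
  obtain ⟨U, c, hc, hU, rfl⟩ := hP.exists_isometry_diagonal_eq hr
  refine ⟨U, hU, ?_⟩
  set D := diagonal (fun i => (c i : 𝕜))
  have hcompress : ∀ Q : Matrix (Fin k) (Fin k) 𝕜, Uᴴ * (U * Q * Uᴴ) * U = Q := fun Q => by
    simp only [Matrix.mul_assoc, hU, Matrix.mul_one, ← Matrix.mul_assoc Uᴴ U, Matrix.one_mul]
  have hsq : D * D = D := calc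
    D * D = Uᴴ * ((U * D * Uᴴ) * (U * D * Uᴴ)) * U := by
      rw [← hcompress (D * D)]
      simp only [Matrix.mul_assoc, hU, Matrix.mul_one, ← Matrix.mul_assoc Uᴴ U, Matrix.one_mul]
    _ = D := by rw [hPP, hcompress]
  have hc1 : ∀ i, (c i : 𝕜) = 1 := fun i => by
    have := congrArg (fun Q => Q i i) hsq
    simp only [D, diagonal_mul_diagonal, diagonal_apply_eq] at this
    exact (mul_eq_right₀ (by exact_mod_cast hc i)).mp this
  simp [D, hc1]

namespace IsSortedSingVal

open Polynomial

variable {d : ℕ} {A : Matrix (Fin d) (Fin d) ℂ} {s : Fin d → ℝ}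

theorem exists_sq_eq_eigenvalues (hs : IsSortedSingVal A s) :
    ∃ σ : Equiv.Perm (Fin d), ∀ i,
      s i ^ 2 = (posSemidef_conjTranspose_mul_self A).isHermitian.eigenvalues (σ i) := by
  obtain ⟨-, σ, hσ⟩ := hs
  refine ⟨σ, fun i => ?_⟩
  rw [hσ, singVal, Real.sq_sqrt ((posSemidef_conjTranspose_mul_self A).eigenvalues_nonneg _)]

theorem nonneg (hs : IsSortedSingVal A s) (i : Fin d) : 0 ≤ s i := by
  obtain ⟨-, σ, hσ⟩ := hs
  rw [hσ]
  exact Real.sqrt_nonneg _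

theorem rank_eq_card_ne_zero (hs : IsSortedSingVal A s) :
    A.rank = Fintype.card {i // s i ≠ 0} := by
  obtain ⟨σ, hσ⟩ := hs.exists_sq_eq_eigenvalues
  rw [← rank_conjTranspose_mul_self,
    (posSemidef_conjTranspose_mul_self A).isHermitian.rank_eq_card_non_zero_eigs]
  refine (Fintype.card_congr (σ.subtypeEquiv fun i => ?_)).symm
  rw [← hσ, Ne, Ne, pow_eq_zero_iff two_ne_zero]

theorem eq_zero_of_rank_le (hs : IsSortedSingVal A s) {k : ℕ} (hr : A.rank ≤ k) (j : Fin d)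
    (hj : k ≤ (j : ℕ)) : s j = 0 := by
  by_contra hne
  have hpos : ∀ i ∈ Finset.Iic j, s i ≠ 0 := fun i hi =>
    ((lt_of_le_of_ne (hs.nonneg j) (Ne.symm hne)).trans_le (hs.1 (Finset.mem_Iic.mp hi))).ne'
  have hcard := Finset.card_le_card
    (fun i hi => Finset.mem_filter.mpr ⟨Finset.mem_univ i, hpos i hi⟩ :
      Finset.Iic j ⊆ Finset.univ.filter fun i => s i ≠ 0)
  rw [Fin.card_Iic, ← Fintype.card_subtype, ← hs.rank_eq_card_ne_zero] at hcard
  omega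

theorem charpoly_conjTranspose_mul_self (hs : IsSortedSingVal A s) {k : ℕ} (hk : k ≤ d)
    (hr : A.rank ≤ k) :
    (Aᴴ * A).charpoly =
      X ^ (d - k) * ∏ i : Fin k, (X - C ((s (Fin.castLE hk i) ^ 2 : ℝ) : ℂ)) := by
  obtain ⟨σ, hσ⟩ := hs.exists_sq_eq_eigenvalues
  rw [(posSemidef_conjTranspose_mul_self A).isHermitian.charpoly_eq, ← Equiv.prod_comp σ]
  simp only [← hσ]
  push_cast
  exact prod_X_sub_C_eq_X_pow_mul_of_eq_zero hk _ fun i hi => by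
    simp [hs.eq_zero_of_rank_le hr i hi]

theorem sq_prod_eq_det (hs : IsSortedSingVal A s) {k : ℕ} (hk : k ≤ d)
    (L : Matrix (Fin d) (Fin k) ℂ) (R : Matrix (Fin k) (Fin d) ℂ) (h : Aᴴ * A = L * R) :
    (((∏ i : Fin k, s (Fin.castLE hk i)) ^ 2 : ℝ) : ℂ) = (R * L).det := by
  have hr : A.rank ≤ k := by
    rw [← rank_conjTranspose_mul_self, h]
    exact (rank_mul_le_left L R).trans L.rank_le_width
  have hchar : (R * L).charpoly = ∏ i : Fin k, (X - C ((s (Fin.castLE hk i) ^ 2 : ℝ) : ℂ)) := by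
    refine (isRegular_X_pow (d - k)).left.eq_iff.mp ?_
    rw [← hs.charpoly_conjTranspose_mul_self hk hr, h,
      charpoly_mul_comm_of_le L R (by simpa using hk), Fintype.card_fin, Fintype.card_fin]
  rw [det_eq_prod_of_charpoly_eq _ _ hchar]
  push_cast
  rw [Finset.prod_pow]

end IsSortedSingVal

theorem prod_top_singVal_mul_general (d k : ℕ) (hk : k ≤ d)
    (M X P Mk : Matrix (Fin d) (Fin d) ℂ)
    (hPherm : Pᴴ = P) (hPidem : P * P = P) (hPrank : P.rank = k)
    (hPX : P * X = X) (hMk : Mk = M * P)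
    (sMkX sMk sX : Fin d → ℝ)
    (h1 : IsSortedSingVal (Mk * X) sMkX)
    (h2 : IsSortedSingVal Mk sMk)
    (h3 : IsSortedSingVal X sX) :
    ∏ i : Fin k, sMkX (Fin.castLE hk i) =
      (∏ i : Fin k, sMk (Fin.castLE hk i)) * ∏ i : Fin k, sX (Fin.castLE hk i) := by
  obtain ⟨U, hU, hUP⟩ := IsHermitian.exists_isometry_mul_conjTranspose_eq hPherm hPidem hPrank
  set A := M * U
  set B := Uᴴ * X
  have hX : X = U * B := by rw [← Matrix.mul_assoc, hUP, hPX]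
  have hMkA : Mk = A * Uᴴ := by rw [hMk, ← hUP, Matrix.mul_assoc]
  have hcancel : ∀ {m : Type} (Q : Matrix (Fin k) m ℂ), Uᴴ * (U * Q) = Q := fun Q => by
    rw [← Matrix.mul_assoc, hU, Matrix.one_mul]
  have hdetX := h3.sq_prod_eq_det hk Bᴴ B (by rw [hX, conjTranspose_mul, Matrix.mul_assoc, hcancel])
  have hdetMk := h2.sq_prod_eq_det hk (U * (Aᴴ * A)) Uᴴ (by
    rw [hMkA, conjTranspose_mul, conjTranspose_conjTranspose]; simp only [Matrix.mul_assoc])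
  have hdetMkX := h1.sq_prod_eq_det hk (Bᴴ * (Aᴴ * A)) B (by
    rw [hMkA, hX, Matrix.mul_assoc A, hcancel, conjTranspose_mul]; simp only [Matrix.mul_assoc])
  rw [hcancel] at hdetMk
  rw [← Matrix.mul_assoc, det_mul, ← hdetX, ← hdetMk] at hdetMkX
  have hsq : (∏ i : Fin k, sMkX (Fin.castLE hk i)) ^ 2 =
      (∏ i : Fin k, sX (Fin.castLE hk i)) ^ 2 * (∏ i : Fin k, sMk (Fin.castLE hk i)) ^ 2 := by
    exact_mod_cast hdetMkX
  refine (pow_left_inj₀ (Finset.prod_nonneg fun i _ => h1.nonneg _)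
    (mul_nonneg (Finset.prod_nonneg fun i _ => h2.nonneg _)
      (Finset.prod_nonneg fun i _ => h3.nonneg _)) two_ne_zero).mp ?_
  rw [hsq]
  ring

/-- let `X` have rank `k`, `P` be the orthogonal projection onto the
column space of `X` (so `Pᴴ = P`, `P² = P`, `P.rank = k`, `P * X = X`) and
`Mk = M * P`.  Then the product of the `k` largest singular values of `Mk * X`
equals the product of the `k` largest singular values of `Mk` times the product of
the `k` largest (i.e. all nonzero) singular values of `X`. -/
theorem prod_top_singVal_mul (d k : ℕ) (hk : k ≤ d)
    (M X P Mk : Matrix (Fin d) (Fin d) ℂ)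
    (hXrank : X.rank = k)
    (hPherm : Pᴴ = P) (hPidem : P * P = P) (hPrank : P.rank = k)
    (hPX : P * X = X) (hMk : Mk = M * P)
    (sMkX sMk sX : Fin d → ℝ)
    (h1 : IsSortedSingVal (Mk * X) sMkX)
    (h2 : IsSortedSingVal Mk sMk)
    (h3 : IsSortedSingVal X sX) :
    ∏ i : Fin k, sMkX (Fin.castLE hk i) =
      (∏ i : Fin k, sMk (Fin.castLE hk i)) * ∏ i : Fin k, sX (Fin.castLE hk i) :=
  prod_top_singVal_mul_general d k hk M X P Mk hPherm hPidem hPrank hPX hMk sMkX sMk sX h1 h2 h3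
end

section
/- Let N be a quantum channel (completely positive trace-preserving linear map) on operators of a finite-dimensional Hilbert space H_A, and let |ψ⟩ = ∑_i √λ_i |i⟩_A |i⟩_B be a bipartite pure state with orthonormal families {|i⟩_A}, {|i⟩_B} and all λ_i > 0 for i in some index set S with |S| ≥ 2. If (N ⊗ id)[|ψ⟩⟨ψ|] = |ψ⟩⟨ψ|, then N[|l⟩⟨k|] = |l⟩⟨k| for all k, l ∈ S; consequently N acts as the identity on all operators supported on span{|i⟩_A : i ∈ S}, and in particular N[|η⟩⟨η|] = |η⟩⟨η| for every unit vector |η⟩ in that span. -/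
/-!
Put `vₜ = (Kₜ ⊗ 1) ψ`. The fixed-point equation says `∑ₜ |vₜ⟩⟨vₜ| = |ψ⟩⟨ψ|`, which has rank one,
so `vₜ = cₜ ψ` with `∑ₜ |cₜ|² = 1`. Since `Kₜ ⊗ 1` acts on the first factor only, contracting
`vₜ = cₜ ψ` with `⟨i|_B` gives `√λᵢ Kₜ |i⟩_A = cₜ √λᵢ |i⟩_A`: every `|i⟩_A` is an eigenvector of
every Kraus operator, with an eigenvalue `cₜ` independent of `i`. Hence
`N[|u⟩⟨w|] = ∑ₜ |cₜ|² |u⟩⟨w| = |u⟩⟨w|` for all `u, w` in their span.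
-/

open Matrix Kronecker

/-- The projector `|v⟩⟨v|` onto a vector `v` (as a matrix). -/
noncomputable def outer {n : Type*} [Fintype n] (v : n → ℂ) : Matrix n n ℂ :=
  Matrix.vecMulVec v (star v)

lemma mul_vecMulVec_star_mul_conjTranspose {α l m : Type*} [CommSemiring α] [StarRing α]
    [Fintype m] (M : Matrix l m α) (u w : m → α) :
    M * vecMulVec u (star w) * Mᴴ = vecMulVec (M *ᵥ u) (star (M *ᵥ w)) := by
  rw [mul_vecMulVec, vecMulVec_mul, star_mulVec]

lemma sum_mul_vecMulVec_mul_conjTranspose_of_mulVec_eq_smul {m τ : Type*} [Fintype m]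
    [Fintype τ] {K : τ → Matrix m m ℂ} {c : τ → ℂ} (hc : ∑ t, c t * star (c t) = 1)
    {u w : m → ℂ} (hu : ∀ t, K t *ᵥ u = c t • u) (hw : ∀ t, K t *ᵥ w = c t • w) :
    ∑ t, K t * vecMulVec u (star w) * (K t)ᴴ = vecMulVec u (star w) := by
  simp_rw [mul_vecMulVec_star_mul_conjTranspose, hu, hw, star_smul, smul_vecMulVec,
    vecMulVec_smul, smul_smul, ← Finset.sum_smul, hc, one_smul]

open scoped ComplexOrder in
lemma exists_eq_smul_of_sum_vecMulVec_eq {m τ : Type*} [Fintype τ] {v : τ → m → ℂ}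
    {ψ : m → ℂ} (hψ : ψ ≠ 0)
    (h : ∑ t, vecMulVec (v t) (star (v t)) = vecMulVec ψ (star ψ)) :
    ∃ c : τ → ℂ, ∑ t, c t * star (c t) = 1 ∧ ∀ t, v t = c t • ψ := by
  obtain ⟨p₀, hp₀⟩ := Function.ne_iff.mp hψ
  have hentry : ∀ p q, ∑ t, v t p * star (v t q) = ψ p * star (ψ q) := fun p q => by
    simpa only [Matrix.sum_apply, vecMulVec_apply, Pi.star_apply] using congrFun (congrFun h p) q
  have hp₀' : star (ψ p₀) ≠ 0 := star_ne_zero.mpr hp₀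
  -- The Gram entries against a coordinate where `ψ` is nonzero force
  -- `∑ₜ |vₜ p - cₜ ψ p|² = |ψ p|² - 2 |ψ p|² + |ψ p|² = 0`.
  set c : τ → ℂ := fun t => v t p₀ / ψ p₀
  have hc : ∑ t, c t * star (c t) = 1 := by
    simp only [c, star_div₀, div_mul_div_comm, ← Finset.sum_div, hentry,
      div_self (mul_ne_zero hp₀ hp₀')]
  have hcross : ∀ p, ∑ t, v t p * star (c t) = ψ p := fun p => by
    simp only [c, star_div₀, mul_div_assoc', ← Finset.sum_div, hentry,
      mul_div_cancel_right₀ _ hp₀']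
  have hcross' : ∀ p, ∑ t, c t * star (v t p) = star (ψ p) := fun p => by
    simpa [star_sum, mul_comm] using congrArg star (hcross p)
  refine ⟨c, hc, fun t => funext fun p => ?_⟩
  have hexpand : ∀ t, (v t p - c t * ψ p) * star (v t p - c t * ψ p) =
      v t p * star (v t p) - star (ψ p) * (v t p * star (c t)) - ψ p * (c t * star (v t p))
        + ψ p * star (ψ p) * (c t * star (c t)) := fun t => by
    simp only [star_sub, star_mul']; ring
  have hzero : (fun t => v t p - c t * ψ p) ⬝ᵥ star (fun t => v t p - c t * ψ p) = 0 := by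
    simp only [dotProduct, Pi.star_apply, hexpand, Finset.sum_add_distrib, Finset.sum_sub_distrib,
      ← Finset.mul_sum, hentry, hcross, hcross', hc]
    ring
  exact sub_eq_zero.mp (congrFun (dotProduct_self_star_eq_zero.mp hzero) t)

lemma kronecker_one_mulVec_sum_mul {α m n ι : Type*} [CommSemiring α] [Fintype m] [Fintype n]
    [DecidableEq n] [Fintype ι] (K : Matrix m m α) (a : ι → m → α) (b : ι → n → α) :
    (K ⊗ₖ (1 : Matrix n n α)) *ᵥ (fun p => ∑ i, a i p.1 * b i p.2) =
      fun p => ∑ i, (K *ᵥ a i) p.1 * b i p.2 := by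
  ext ⟨x, y⟩
  simp only [mulVec, dotProduct, kroneckerMap_apply, one_apply, mul_ite, mul_one, mul_zero, ite_mul,
    zero_mul, Fintype.sum_prod_type, Finset.sum_ite_eq, Finset.mem_univ, ↓reduceIte]
  simp only [Finset.mul_sum, Finset.sum_mul, mul_assoc]
  exact Finset.sum_comm

lemma sum_star_mul_sum_eq_of_orthonormal {n ι : Type*} [Fintype n] [Fintype ι] [DecidableEq ι]
    {e : ι → n → ℂ} (he : ∀ i j, ∑ y, star (e i y) * e j y = if i = j then 1 else 0)
    (f : ι → ℂ) (i : ι) : ∑ y, star (e i y) * ∑ j, f j * e j y = f i := by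
  simp only [Finset.mul_sum, mul_left_comm (star (e i _))]
  rw [Finset.sum_comm]
  simp only [← Finset.mul_sum, he, mul_ite, mul_one, mul_zero, Finset.sum_ite_eq,
    Finset.mem_univ, if_true]

lemma eq_of_sum_mul_eq_sum_mul_of_orthonormal {m n ι : Type*} [Fintype n] [Fintype ι]
    [DecidableEq ι] {e : ι → n → ℂ}
    (he : ∀ i j, ∑ y, star (e i y) * e j y = if i = j then 1 else 0) {a a' : ι → m → ℂ}
    (h : (fun p : m × n => ∑ i, a i p.1 * e i p.2) = fun p => ∑ i, a' i p.1 * e i p.2) :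
    a = a' := by
  funext i x
  simpa only [sum_star_mul_sum_eq_of_orthonormal he] using
    congrArg (fun g => ∑ y, star (e i y) * g (x, y)) h

lemma sum_mul_ne_zero_of_orthonormal {m n ι : Type*} [Fintype n] [Fintype ι] [DecidableEq ι]
    [Nonempty ι] {a : ι → m → ℂ} {e : ι → n → ℂ} (ha : ∀ i, a i ≠ 0)
    (he : ∀ i j, ∑ y, star (e i y) * e j y = if i = j then 1 else 0) :
    (fun p : m × n => ∑ i, a i p.1 * e i p.2) ≠ 0 := by
  intro h
  obtain ⟨i⟩ := ‹Nonempty ι›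
  refine ha i (congrFun (eq_of_sum_mul_eq_sum_mul_of_orthonormal he (a' := 0) ?_) i)
  simp only [Pi.zero_apply, zero_mul, Finset.sum_const_zero]
  exact h

lemma mulVec_eq_smul_of_kronecker_one_mulVec_eq_smul {m n ι : Type*} [Fintype m] [Fintype n]
    [DecidableEq n] [Fintype ι] [DecidableEq ι] {a : ι → m → ℂ} {e : ι → n → ℂ}
    (he : ∀ i j, ∑ y, star (e i y) * e j y = if i = j then 1 else 0)
    {K : Matrix m m ℂ} {c : ℂ}
    (h : (K ⊗ₖ (1 : Matrix n n ℂ)) *ᵥ (fun p => ∑ i, a i p.1 * e i p.2) =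
      c • fun p => ∑ i, a i p.1 * e i p.2) (i : ι) :
    K *ᵥ a i = c • a i := by
  refine congrFun (eq_of_sum_mul_eq_sum_mul_of_orthonormal he (a := fun i => K *ᵥ a i)
    (a' := fun i => c • a i) ?_) i
  rw [← kronecker_one_mulVec_sum_mul, h]
  ext p
  simp [Finset.mul_sum, mul_assoc]

theorem channel_identity_on_schmidt_support_general {dA dB r : ℕ}
    {ι : Type} [Fintype ι] [DecidableEq ι] (hcard : 2 ≤ Fintype.card ι)
    (K : Fin r → Matrix (Fin dA) (Fin dA) ℂ)
    (N : Matrix (Fin dA) (Fin dA) ℂ → Matrix (Fin dA) (Fin dA) ℂ)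
    (hN : ∀ ρ, N ρ = ∑ t, K t * ρ * (K t)ᴴ)
    (lam : ι → ℝ) (hlam : ∀ i, 0 < lam i)
    (eA : ι → Fin dA → ℂ) (eB : ι → Fin dB → ℂ)
    (honA : ∀ i j, ∑ x, star (eA i x) * eA j x = if i = j then 1 else 0)
    (honB : ∀ i j, ∑ x, star (eB i x) * eB j x = if i = j then 1 else 0)
    (ψ : Fin dA × Fin dB → ℂ)
    (hψ : ψ = fun p => ∑ i, (Real.sqrt (lam i) : ℂ) * eA i p.1 * eB i p.2)
    (hfix : ∑ t, (K t ⊗ₖ (1 : Matrix (Fin dB) (Fin dB) ℂ)) * outer ψ *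
        (K t ⊗ₖ (1 : Matrix (Fin dB) (Fin dB) ℂ))ᴴ = outer ψ) :
    (∀ k l : ι, N (Matrix.vecMulVec (eA l) (star (eA k))) =
        Matrix.vecMulVec (eA l) (star (eA k))) ∧
      (∀ c : ι → ℂ, (∑ i, ‖c i‖ ^ 2 = 1) →
        N (outer (fun x => ∑ i, c i * eA i x)) = outer (fun x => ∑ i, c i * eA i x)) := by
  have : Nonempty ι := Fintype.card_pos_iff.mp (by omega)
  have hs : ∀ i, (Real.sqrt (lam i) : ℂ) ≠ 0 := fun i =>
    Complex.ofReal_ne_zero.mpr (Real.sqrt_pos.mpr (hlam i)).ne'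
  let u : ι → Fin dA → ℂ := fun i => (Real.sqrt (lam i) : ℂ) • eA i
  have hu : ∀ i, u i ≠ 0 := fun i => smul_ne_zero (hs i) fun h => by simpa [h] using honA i i
  have hψu : ψ = fun p => ∑ i, u i p.1 * eB i p.2 := by
    simp only [hψ, u, Pi.smul_apply, smul_eq_mul]
  simp only [outer, mul_vecMulVec_star_mul_conjTranspose, hψu] at hfix
  obtain ⟨c, hc, hKψ⟩ :=
    exists_eq_smul_of_sum_vecMulVec_eq (sum_mul_ne_zero_of_orthonormal hu honB) hfix
  have hKe : ∀ t i, K t *ᵥ eA i = c t • eA i := fun t i => smul_right_injective _ (hs i) <| by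
    simpa only [u, mulVec_smul, smul_comm (c t)] using
      mulVec_eq_smul_of_kronecker_one_mulVec_eq_smul honB (hKψ t) i
  refine ⟨fun k l => ?_, fun a _ => ?_⟩
  · rw [hN]
    exact sum_mul_vecMulVec_mul_conjTranspose_of_mulVec_eq_smul hc (hKe · l) (hKe · k)
  · have hη : (fun x => ∑ i, a i * eA i x) = ∑ i, a i • eA i := by
      ext x
      simp [Finset.sum_apply]
    have hKη : ∀ t, K t *ᵥ ∑ i, a i • eA i = c t • ∑ i, a i • eA i := fun t => by
      simp only [mulVec_sum, mulVec_smul, hKe, Finset.smul_sum, smul_comm (a _)]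
    rw [hN, outer, hη]
    exact sum_mul_vecMulVec_mul_conjTranspose_of_mulVec_eq_smul hc hKη hKη

/-- let `N` (given by Kraus operators `K t`, hence a quantum channel)
fix the pure entangled state `|ψ⟩ = ∑ᵢ √λᵢ |i⟩_A |i⟩_B` (all `λᵢ > 0`, `|S| ≥ 2`),
i.e. `(N ⊗ id)[|ψ⟩⟨ψ|] = |ψ⟩⟨ψ|`.  Then `N[|l⟩⟨k|] = |l⟩⟨k|` for all `k, l ∈ S`,
and consequently `N[|η⟩⟨η|] = |η⟩⟨η|` for every unit vector `|η⟩ = ∑ cᵢ |i⟩_A`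
in `span{|i⟩_A : i ∈ S}`. -/
theorem channel_identity_on_schmidt_support {dA dB r : ℕ}
    {ι : Type} [Fintype ι] [DecidableEq ι] (hcard : 2 ≤ Fintype.card ι)
    (K : Fin r → Matrix (Fin dA) (Fin dA) ℂ)
    (hTP : ∑ t, (K t)ᴴ * K t = 1)
    (N : Matrix (Fin dA) (Fin dA) ℂ → Matrix (Fin dA) (Fin dA) ℂ)
    (hN : ∀ ρ, N ρ = ∑ t, K t * ρ * (K t)ᴴ)
    (lam : ι → ℝ) (hlam : ∀ i, 0 < lam i) (hsum : ∑ i, lam i = 1)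
    (eA : ι → Fin dA → ℂ) (eB : ι → Fin dB → ℂ)
    (honA : ∀ i j, ∑ x, star (eA i x) * eA j x = if i = j then 1 else 0)
    (honB : ∀ i j, ∑ x, star (eB i x) * eB j x = if i = j then 1 else 0)
    (ψ : Fin dA × Fin dB → ℂ)
    (hψ : ψ = fun p => ∑ i, (Real.sqrt (lam i) : ℂ) * eA i p.1 * eB i p.2)
    (hfix : ∑ t, (K t ⊗ₖ (1 : Matrix (Fin dB) (Fin dB) ℂ)) * outer ψ *
        (K t ⊗ₖ (1 : Matrix (Fin dB) (Fin dB) ℂ))ᴴ = outer ψ) :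
    (∀ k l : ι, N (Matrix.vecMulVec (eA l) (star (eA k))) =
        Matrix.vecMulVec (eA l) (star (eA k))) ∧
      (∀ c : ι → ℂ, (∑ i, ‖c i‖ ^ 2 = 1) →
        N (outer (fun x => ∑ i, c i * eA i x)) = outer (fun x => ∑ i, c i * eA i x)) :=
  channel_identity_on_schmidt_support_general hcard K N hN lam hlam eA eB honA honB ψ hψ hfix
end

section
/- Let |ψ⟩ be a bipartite pure state with Schmidt coefficients λ_0 ≥ λ_1 ≥ … ≥ λ_{d-1} (∑_i λ_i = 1). Then the maximal fidelity between |ψ⟩⟨ψ| and any pure state of Schmidt rank at most k equals ∑_{i=0}^{k-1} λ_i, and the maximum is attained by |φ⟩ = (∑_{j<k} λ_j)^{-1/2} ∑_{i<k} √λ_i |ii⟩ expressed in the Schmidt bases of |ψ⟩. -/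
/-!
Let `ψ = ∑ᵢ √λᵢ aᵢ ⊗ bᵢ`. Write a unit vector `χ` of Schmidt rank `m ≤ k` as `∑ⱼ fⱼ ⊗ gⱼ` with `(fⱼ)` orthonormal, so that
`∑ⱼ ‖gⱼ‖² = 1`. Then `⟨ψ, χ⟩ = ∑ᵢⱼ √λᵢ ⟨aᵢ, fⱼ⟩ ⟨bᵢ, gⱼ⟩`, and Cauchy–Schwarz together with
Bessel's inequality for `(bᵢ)` gives `|⟨ψ, χ⟩|² ≤ ∑ᵢ λᵢ tᵢ` with `tᵢ = ∑ⱼ |⟨aᵢ, fⱼ⟩|²`.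
Bessel's inequality again gives `tᵢ ≤ 1` and `∑ᵢ tᵢ ≤ m ≤ k`, and for decreasing `λ` such weights
yield at most `∑_{i<k} λᵢ`. The renormalised truncation of the Schmidt decomposition of `ψ`
attains this value.
-/

open Matrix

/-- Coefficient matrix of a bipartite vector. -/
noncomputable def coeffMat {dA dB : ℕ} (v : Fin dA × Fin dB → ℂ) :
    Matrix (Fin dA) (Fin dB) ℂ :=
  Matrix.of fun i j => v (i, j)

open Finset WithLp

/-- Bathtub principle: weights `t ∈ [0, 1]` of total mass at most `#s` are best spent on `s`,
where `lam` lies above the threshold `c`. -/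
theorem sum_mul_le_sum_of_threshold {I : Type*} [Fintype I] [DecidableEq I] {lam t : I → ℝ}
    {s : Finset I} {c : ℝ} (hc : 0 ≤ c) (hs : ∀ i ∈ s, c ≤ lam i) (hsc : ∀ i ∉ s, lam i ≤ c)
    (ht0 : ∀ i, 0 ≤ t i) (ht1 : ∀ i, t i ≤ 1) (ht : ∑ i, t i ≤ #s) :
    ∑ i, lam i * t i ≤ ∑ i ∈ s, lam i := by
  have key : ∀ i, lam i * t i ≤
      (if i ∈ s then lam i else 0) + c * (t i - if i ∈ s then 1 else 0) := by
    intro i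
    split_ifs with hi
    · nlinarith [hs i hi, ht1 i]
    · nlinarith [hsc i hi, ht0 i]
  calc ∑ i, lam i * t i
      ≤ ∑ i, ((if i ∈ s then lam i else 0) + c * (t i - if i ∈ s then 1 else 0)) :=
        sum_le_sum fun i _ => key i
    _ = ∑ i ∈ s, lam i + c * (∑ i, t i - #s) := by
        simp [sum_add_distrib, ← mul_sum, sum_sub_distrib, sum_ite_mem]
    _ ≤ ∑ i ∈ s, lam i := by nlinarith

theorem sum_mul_le_sum_filter_lt {d k : ℕ} {lam t : Fin d → ℝ} (hnn : ∀ i, 0 ≤ lam i)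
    (hmono : Antitone lam) (ht0 : ∀ i, 0 ≤ t i) (ht1 : ∀ i, t i ≤ 1) (ht : ∑ i, t i ≤ k) :
    ∑ i, lam i * t i ≤ ∑ i ∈ univ.filter (fun i : Fin d => (i : ℕ) < k), lam i := by
  have hcard : ∑ i, t i ≤ #(univ.filter fun i : Fin d => (i : ℕ) < k) := by
    have hd : ∑ i, t i ≤ d := by simpa using sum_le_sum fun i (_ : i ∈ univ) => ht1 i
    rw [Fin.card_filter_val_lt, Nat.cast_min]
    exact le_min hd ht
  by_cases hkd : k < d
  · -- the threshold is `lam k`, the largest weight left out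
    refine sum_mul_le_sum_of_threshold (hnn ⟨k, hkd⟩) (fun i hi => hmono ?_)
      (fun i hi => hmono ?_) ht0 ht1 hcard
    · simp only [mem_filter, mem_univ, true_and] at hi
      exact Fin.mk_le_of_le_val hi.le
    · simp only [mem_filter, mem_univ, true_and, not_lt] at hi
      exact Fin.le_def.mpr hi
  · refine sum_mul_le_sum_of_threshold le_rfl (fun i _ => hnn i) (fun i hi => ?_) ht0 ht1 hcard
    simp only [mem_filter, mem_univ, true_and] at hi
    omega

theorem sum_filter_lt_pos {d k : ℕ} (hk : 1 ≤ k) {lam : Fin d → ℝ} (hnn : ∀ i, 0 ≤ lam i)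
    (hmono : Antitone lam) (hsum : ∑ i, lam i = 1) :
    0 < ∑ i ∈ univ.filter (fun i : Fin d => (i : ℕ) < k), lam i := by
  have hd : 0 < d := Nat.pos_of_ne_zero fun h => by subst h; simp at hsum
  have h₀ : 0 < lam ⟨0, hd⟩ := by
    by_contra! h
    have : ∑ i, lam i ≤ 0 :=
      sum_nonpos fun i _ => (hmono (Fin.mk_le_of_le_val (Nat.zero_le _))).trans h
    linarith
  have h₀F : (⟨0, hd⟩ : Fin d) ∈ univ.filter (fun i : Fin d => (i : ℕ) < k) := by
    simp only [mem_filter, mem_univ, true_and]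
    omega
  exact h₀.trans_le (single_le_sum (fun i _ => hnn i) h₀F)

theorem Matrix.rank_sum_vecMulVec_le {R ι κ I : Type*} [CommRing R] [StrongRankCondition R]
    [Fintype κ] (s : Finset I) (a : I → ι → R) (b : I → κ → R) :
    (∑ i ∈ s, vecMulVec (a i) (b i)).rank ≤ #s := by
  have : ∑ i ∈ s, vecMulVec (a i) (b i) =
      (of fun x (i : s) => a i x) * of fun (i : s) y => b i y := by
    ext x y
    simp [Matrix.sum_apply, vecMulVec_apply, mul_apply, ← sum_attach s]
  rw [this]
  exact (rank_mul_le_left _ _).trans ((rank_le_card_width _).trans_eq (Fintype.card_coe s))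

section

variable {𝕜 : Type*} [RCLike 𝕜] {ι κ I J : Type*}

noncomputable def prodVec (a : ι → 𝕜) (b : κ → 𝕜) : ι × κ → 𝕜 :=
  fun p => a p.1 * b p.2

theorem of_curry_sum_prodVec (s : Finset I) (a : I → ι → 𝕜) (b : I → κ → 𝕜) :
    of (Function.curry (∑ i ∈ s, prodVec (a i) (b i))) = ∑ i ∈ s, vecMulVec (a i) (b i) := by
  ext x y
  simp [Matrix.sum_apply, Finset.sum_apply, prodVec, vecMulVec_apply]

noncomputable def schmidtVec (s : Finset I) (lam : I → ℝ) (a : I → ι → 𝕜) (b : I → κ → 𝕜) :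
    ι × κ → 𝕜 :=
  ∑ i ∈ s, prodVec ((√(lam i) : 𝕜) • a i) (b i)

theorem rank_of_curry_smul_schmidtVec_le [Fintype κ] (c : 𝕜) (s : Finset I) (lam : I → ℝ)
    (a : I → ι → 𝕜) (b : I → κ → 𝕜) :
    (of (Function.curry (c • schmidtVec s lam a b))).rank ≤ #s := by
  have : c • schmidtVec s lam a b = ∑ i ∈ s, prodVec ((c * √(lam i)) • a i) (b i) := by
    funext p
    simp [schmidtVec, prodVec, Finset.sum_apply, mul_sum, RCLike.real_smul_eq_coe_mul, mul_assoc]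
  rw [this, of_curry_sum_prodVec]
  exact rank_sum_vecMulVec_le _ _ _

variable [Fintype ι] [Fintype κ]

theorem orthonormal_toLp_iff [DecidableEq I] {v : I → ι → 𝕜} :
    Orthonormal 𝕜 (fun i => toLp 2 (v i)) ↔
      ∀ i j, star (v i) ⬝ᵥ v j = if i = j then 1 else 0 := by
  simp only [orthonormal_iff_ite, EuclideanSpace.inner_toLp_toLp, dotProduct_comm]

theorem Orthonormal.sum_norm_sq_eq_one {v : I → ι → 𝕜}
    (hv : Orthonormal 𝕜 (fun i => toLp 2 (v i))) (i : I) : ∑ x, ‖v i x‖ ^ 2 = 1 := by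
  have h := EuclideanSpace.norm_sq_eq (toLp 2 (v i))
  rw [hv.1 i, one_pow] at h
  simpa using h.symm

theorem Orthonormal.sum_norm_star_dotProduct_sq_le [Fintype I] {v : I → ι → 𝕜}
    (hv : Orthonormal 𝕜 (fun i => toLp 2 (v i))) (w : ι → 𝕜) :
    ∑ i, ‖star (v i) ⬝ᵥ w‖ ^ 2 ≤ ∑ x, ‖w x‖ ^ 2 := by
  simpa [EuclideanSpace.inner_toLp_toLp, dotProduct_comm, EuclideanSpace.norm_sq_eq]
    using hv.sum_inner_products_le (toLp 2 w) (s := univ)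

theorem ofReal_sum_norm_sq (v : ι → 𝕜) : ((∑ x, ‖v x‖ ^ 2 : ℝ) : 𝕜) = star v ⬝ᵥ v := by
  simp [dotProduct, RCLike.star_def, RCLike.conj_mul]

theorem norm_star_dotProduct_comm (v w : ι → 𝕜) : ‖star v ⬝ᵥ w‖ = ‖star w ⬝ᵥ v‖ := by
  rw [star_dotProduct, norm_star]

theorem norm_sum_mul_sq_le [Fintype I] (x y : I → 𝕜) :
    ‖∑ i, x i * y i‖ ^ 2 ≤ (∑ i, ‖x i‖ ^ 2) * ∑ i, ‖y i‖ ^ 2 :=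
  calc ‖∑ i, x i * y i‖ ^ 2 ≤ (∑ i, ‖x i‖ * ‖y i‖) ^ 2 := by
        gcongr
        exact (norm_sum_le _ _).trans_eq (by simp only [norm_mul])
    _ ≤ _ := sum_mul_sq_le_sq_mul_sq _ _ _

theorem Matrix.exists_orthonormal_eq_sum_vecMulVec (M : Matrix ι κ 𝕜) :
    ∃ (f : Fin M.rank → ι → 𝕜) (g : Fin M.rank → κ → 𝕜),
      Orthonormal 𝕜 (fun j => toLp 2 (f j)) ∧ M = ∑ j, vecMulVec (f j) (g j) := by
  set S : Submodule 𝕜 (EuclideanSpace 𝕜 ι) :=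
    Submodule.span 𝕜 (Set.range fun y => toLp 2 (M.col y))
  have hS : Module.finrank 𝕜 S = M.rank := by
    rw [rank_eq_finrank_span_cols, ← (WithLp.linearEquiv 2 𝕜 (ι → 𝕜)).symm.finrank_map_eq,
      Submodule.map_span, ← Set.range_comp]
    rfl
  let e := (stdOrthonormalBasis 𝕜 S).reindex (finCongr hS)
  refine ⟨fun j => ofLp (e j : EuclideanSpace 𝕜 ι),
    fun j y => inner 𝕜 (e j : EuclideanSpace 𝕜 ι) (toLp 2 (M.col y)), ?_, ?_⟩
  · exact e.orthonormal.comp_linearIsometry S.subtypeₗᵢ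
  · ext x y
    have hy : toLp 2 (M.col y) ∈ S := Submodule.subset_span ⟨y, rfl⟩
    have := congrArg (fun v : S => (v : EuclideanSpace 𝕜 ι) x) (e.sum_repr' ⟨_, hy⟩)
    simpa [Matrix.sum_apply, vecMulVec_apply, mul_comm] using this.symm

theorem star_prodVec_dotProduct_prodVec (a c : ι → 𝕜) (b e : κ → 𝕜) :
    star (prodVec a b) ⬝ᵥ prodVec c e = (star a ⬝ᵥ c) * (star b ⬝ᵥ e) := by
  simp only [prodVec, dotProduct, Pi.star_apply, star_mul', Fintype.sum_prod_type, sum_mul_sum,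
    mul_mul_mul_comm]

theorem star_sum_prodVec_dotProduct_sum_prodVec (s : Finset I) (t : Finset J)
    (a : I → ι → 𝕜) (b : I → κ → 𝕜) (c : J → ι → 𝕜) (e : J → κ → 𝕜) :
    star (∑ i ∈ s, prodVec (a i) (b i)) ⬝ᵥ ∑ j ∈ t, prodVec (c j) (e j) =
      ∑ i ∈ s, ∑ j ∈ t, (star (a i) ⬝ᵥ c j) * (star (b i) ⬝ᵥ e j) := by
  simp only [star_sum, sum_dotProduct]
  simp only [dotProduct_sum, star_prodVec_dotProduct_prodVec]

theorem sum_norm_sum_prodVec_sq_of_orthonormal [Fintype J] {f : J → ι → 𝕜}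
    (hf : Orthonormal 𝕜 (fun j => toLp 2 (f j))) (g : J → κ → 𝕜) :
    ∑ p, ‖(∑ j, prodVec (f j) (g j)) p‖ ^ 2 = ∑ j, ∑ y, ‖g j y‖ ^ 2 := by
  classical
  apply RCLike.ofReal_injective (K := 𝕜)
  rw [ofReal_sum_norm_sq, star_sum_prodVec_dotProduct_sum_prodVec]
  rw [orthonormal_toLp_iff] at hf
  simp [hf, ← ofReal_sum_norm_sq]

theorem star_schmidtVec_dotProduct_schmidtVec [DecidableEq I] {lam : I → ℝ}
    (hnn : ∀ i, 0 ≤ lam i) {a : I → ι → 𝕜} {b : I → κ → 𝕜}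
    (ha : Orthonormal 𝕜 (fun i => toLp 2 (a i))) (hb : Orthonormal 𝕜 (fun i => toLp 2 (b i)))
    (s t : Finset I) :
    star (schmidtVec s lam a b) ⬝ᵥ schmidtVec t lam a b = ((∑ i ∈ s ∩ t, lam i : ℝ) : 𝕜) := by
  rw [orthonormal_toLp_iff] at ha hb
  rw [schmidtVec, schmidtVec, star_sum_prodVec_dotProduct_sum_prodVec]
  have hterm : ∀ i j, (star ((√(lam i) : 𝕜) • a i) ⬝ᵥ (√(lam j) : 𝕜) • a j) *
      (star (b i) ⬝ᵥ b j) = if i = j then (lam i : 𝕜) else 0 := by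
    intro i j
    rw [star_smul, smul_dotProduct, dotProduct_smul, ha, hb]
    split_ifs with h
    · subst h
      simp [← RCLike.ofReal_mul, Real.mul_self_sqrt (hnn i)]
    · simp
  simp_rw [hterm, sum_ite_eq, sum_ite_mem, RCLike.ofReal_sum]

theorem sum_norm_inv_sqrt_smul_schmidtVec_sq [DecidableEq I] {lam : I → ℝ}
    (hnn : ∀ i, 0 ≤ lam i) {a : I → ι → 𝕜} {b : I → κ → 𝕜}
    (ha : Orthonormal 𝕜 (fun i => toLp 2 (a i))) (hb : Orthonormal 𝕜 (fun i => toLp 2 (b i)))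
    {s : Finset I} (hs : 0 < ∑ i ∈ s, lam i) :
    ∑ p, ‖((√(∑ i ∈ s, lam i) : 𝕜)⁻¹ • schmidtVec s lam a b) p‖ ^ 2 = 1 := by
  apply RCLike.ofReal_injective (K := 𝕜)
  rw [ofReal_sum_norm_sq, star_smul, smul_dotProduct, dotProduct_smul,
    star_schmidtVec_dotProduct_schmidtVec hnn ha hb, inter_self]
  have h : (√(∑ i ∈ s, lam i))⁻¹ * ((√(∑ i ∈ s, lam i))⁻¹ * ∑ i ∈ s, lam i) = 1 := by
    rw [← mul_assoc, ← mul_inv, Real.mul_self_sqrt hs.le, inv_mul_cancel₀ hs.ne']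
  simp only [smul_eq_mul, RCLike.star_def, map_inv₀, RCLike.conj_ofReal]
  exact_mod_cast h

theorem star_inv_sqrt_smul_schmidtVec_dotProduct_schmidtVec [DecidableEq I] {lam : I → ℝ}
    (hnn : ∀ i, 0 ≤ lam i) {a : I → ι → 𝕜} {b : I → κ → 𝕜}
    (ha : Orthonormal 𝕜 (fun i => toLp 2 (a i))) (hb : Orthonormal 𝕜 (fun i => toLp 2 (b i)))
    {s t : Finset I} (hst : s ⊆ t) :
    star ((√(∑ i ∈ s, lam i) : 𝕜)⁻¹ • schmidtVec s lam a b) ⬝ᵥ schmidtVec t lam a b =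
      √(∑ i ∈ s, lam i) := by
  rw [star_smul, smul_dotProduct, star_schmidtVec_dotProduct_schmidtVec hnn ha hb,
    inter_eq_left.mpr hst]
  simp only [smul_eq_mul, RCLike.star_def, map_inv₀, RCLike.conj_ofReal]
  exact_mod_cast (by rw [inv_mul_eq_div, Real.div_sqrt] :
    (√(∑ i ∈ s, lam i))⁻¹ * ∑ i ∈ s, lam i = √(∑ i ∈ s, lam i))

theorem norm_star_schmidtVec_dotProduct_sq_le [Fintype I] [Fintype J] {w : I → ℝ}
    (hw : ∀ i, 0 ≤ w i) (a : I → ι → 𝕜) {b : I → κ → 𝕜}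
    (hb : Orthonormal 𝕜 (fun i => toLp 2 (b i))) (f : J → ι → 𝕜) (g : J → κ → 𝕜) :
    ‖star (schmidtVec univ w a b) ⬝ᵥ ∑ j, prodVec (f j) (g j)‖ ^ 2 ≤
      (∑ i, w i * ∑ j, ‖star (a i) ⬝ᵥ f j‖ ^ 2) * ∑ j, ∑ y, ‖g j y‖ ^ 2 := by
  rw [schmidtVec, star_sum_prodVec_dotProduct_sum_prodVec, ← Fintype.sum_prod_type']
  refine (norm_sum_mul_sq_le _ _).trans
    (mul_le_mul (le_of_eq ?_) ?_ (by positivity)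
      (sum_nonneg fun i _ => mul_nonneg (hw i) (by positivity)))
  · simp [Fintype.sum_prod_type, star_smul, smul_dotProduct, mul_sum, norm_smul, mul_pow,
      Real.sq_sqrt (hw _)]
  · rw [Fintype.sum_prod_type, sum_comm]
    refine sum_le_sum fun j _ => ?_
    simpa only [norm_star_dotProduct_comm] using hb.sum_norm_star_dotProduct_sq_le (g j)

theorem sum_mul_sum_norm_star_dotProduct_sq_le {d m k : ℕ} {lam : Fin d → ℝ}
    (hnn : ∀ i, 0 ≤ lam i) (hmono : Antitone lam) {a : Fin d → ι → 𝕜} {f : Fin m → ι → 𝕜}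
    (ha : Orthonormal 𝕜 (fun i => toLp 2 (a i))) (hf : Orthonormal 𝕜 (fun j => toLp 2 (f j)))
    (hmk : m ≤ k) :
    ∑ i, lam i * ∑ j, ‖star (a i) ⬝ᵥ f j‖ ^ 2 ≤
      ∑ i ∈ univ.filter (fun i : Fin d => (i : ℕ) < k), lam i := by
  refine sum_mul_le_sum_filter_lt hnn hmono (fun i => by positivity) (fun i => ?_) ?_
  · calc ∑ j, ‖star (a i) ⬝ᵥ f j‖ ^ 2 = ∑ j, ‖star (f j) ⬝ᵥ a i‖ ^ 2 := by
          simp only [norm_star_dotProduct_comm]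
      _ ≤ ∑ x, ‖a i x‖ ^ 2 := hf.sum_norm_star_dotProduct_sq_le (a i)
      _ = 1 := ha.sum_norm_sq_eq_one i
  · calc ∑ i, ∑ j, ‖star (a i) ⬝ᵥ f j‖ ^ 2 = ∑ j, ∑ i, ‖star (a i) ⬝ᵥ f j‖ ^ 2 := sum_comm
      _ ≤ ∑ j, ∑ x, ‖f j x‖ ^ 2 :=
          sum_le_sum fun j _ => ha.sum_norm_star_dotProduct_sq_le (f j)
      _ = m := by simp [hf.sum_norm_sq_eq_one]
      _ ≤ k := by exact_mod_cast hmk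

theorem norm_star_dotProduct_schmidtVec_sq_le_sum_filter_lt {d k : ℕ} {lam : Fin d → ℝ}
    (hnn : ∀ i, 0 ≤ lam i) (hmono : Antitone lam) {a : Fin d → ι → 𝕜} {b : Fin d → κ → 𝕜}
    (ha : Orthonormal 𝕜 (fun i => toLp 2 (a i))) (hb : Orthonormal 𝕜 (fun i => toLp 2 (b i)))
    {χ : ι × κ → 𝕜} (hχ : ∑ p, ‖χ p‖ ^ 2 = 1) (hrank : (of (Function.curry χ)).rank ≤ k) :
    ‖star χ ⬝ᵥ schmidtVec univ lam a b‖ ^ 2 ≤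
      ∑ i ∈ univ.filter (fun i : Fin d => (i : ℕ) < k), lam i := by
  obtain ⟨f, g, hf, hfg⟩ := (of (Function.curry χ)).exists_orthonormal_eq_sum_vecMulVec
  have hχ_eq : χ = ∑ j, prodVec (f j) (g j) := by
    rw [← of_curry_sum_prodVec] at hfg
    simpa using congrArg (Function.uncurry ∘ of.symm) hfg
  rw [norm_star_dotProduct_comm, hχ_eq]
  calc _ ≤ (∑ i, lam i * ∑ j, ‖star (a i) ⬝ᵥ f j‖ ^ 2) * ∑ j, ∑ y, ‖g j y‖ ^ 2 :=
        norm_star_schmidtVec_dotProduct_sq_le hnn a hb f g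
    _ = ∑ i, lam i * ∑ j, ‖star (a i) ⬝ᵥ f j‖ ^ 2 := by
        rw [← sum_norm_sum_prodVec_sq_of_orthonormal hf, ← hχ_eq, hχ, mul_one]
    _ ≤ _ := sum_mul_sum_norm_star_dotProduct_sq_le hnn hmono ha hf hrank

end

theorem k_schmidt_fidelity_pure_general {dA dB d k : ℕ} (hk1 : 1 ≤ k)
    (lam : Fin d → ℝ) (hnn : ∀ i, 0 ≤ lam i) (hmono : Antitone lam)
    (hsum : ∑ i, lam i = 1)
    (eA : Fin d → Fin dA → ℂ) (eB : Fin d → Fin dB → ℂ)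
    (honA : ∀ i j, ∑ x, star (eA i x) * eA j x = if i = j then 1 else 0)
    (honB : ∀ i j, ∑ x, star (eB i x) * eB j x = if i = j then 1 else 0)
    (ψ : Fin dA × Fin dB → ℂ)
    (hψ : ψ = fun p => ∑ i, (Real.sqrt (lam i) : ℂ) * eA i p.1 * eB i p.2)
    (φ : Fin dA × Fin dB → ℂ)
    (hφ : φ = fun p =>
      (1 / (Real.sqrt (∑ j ∈ Finset.univ.filter (fun j : Fin d => (j : ℕ) < k), lam j) : ℂ)) *
        ∑ i ∈ Finset.univ.filter (fun i : Fin d => (i : ℕ) < k),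
          (Real.sqrt (lam i) : ℂ) * eA i p.1 * eB i p.2) :
    IsGreatest
      { F : ℝ | ∃ χ : Fin dA × Fin dB → ℂ,
          (∑ p, ‖χ p‖ ^ 2 = 1) ∧ (coeffMat χ).rank ≤ k ∧
          F = ‖∑ p, star (χ p) * ψ p‖ ^ 2 }
      (∑ i ∈ Finset.univ.filter (fun i : Fin d => (i : ℕ) < k), lam i) ∧
    ‖∑ p, star (φ p) * ψ p‖ ^ 2 =
      ∑ i ∈ Finset.univ.filter (fun i : Fin d => (i : ℕ) < k), lam i := by
  have hA := orthonormal_toLp_iff.mpr honA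
  have hB := orthonormal_toLp_iff.mpr honB
  set F := Finset.univ.filter (fun i : Fin d => (i : ℕ) < k)
  set s := ∑ i ∈ F, lam i
  have hs : 0 < s := sum_filter_lt_pos hk1 hnn hmono hsum
  have hψ' : ψ = schmidtVec univ lam eA eB := by
    subst hψ; funext p; simp [schmidtVec, Finset.sum_apply, prodVec, mul_assoc]
  have hφ' : φ = (√s : ℂ)⁻¹ • schmidtVec F lam eA eB := by
    subst hφ; funext p; simp [schmidtVec, Finset.sum_apply, prodVec, mul_sum, mul_assoc]
  have hfid : ‖∑ p, star (φ p) * ψ p‖ ^ 2 = s := by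
    have h : star φ ⬝ᵥ ψ = √s := by
      rw [hφ', hψ']
      exact star_inv_sqrt_smul_schmidtVec_dotProduct_schmidtVec hnn hA hB (subset_univ F)
    change ‖star φ ⬝ᵥ ψ‖ ^ 2 = s
    simp [h, Real.sq_sqrt hs.le]
  have hnorm : ∑ p, ‖φ p‖ ^ 2 = 1 := by
    rw [hφ']
    exact sum_norm_inv_sqrt_smul_schmidtVec_sq hnn hA hB hs
  have hrank : (coeffMat φ).rank ≤ k := by
    rw [hφ']
    exact (rank_of_curry_smul_schmidtVec_le _ F lam eA eB).trans
      (Fin.card_filter_val_lt.trans_le (min_le_right d k))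
  refine ⟨⟨⟨φ, hnorm, hrank, hfid.symm⟩, ?_⟩, hfid⟩
  rintro _ ⟨χ, hχ, hχrank, rfl⟩
  rw [hψ']
  exact norm_star_dotProduct_schmidtVec_sq_le_sum_filter_lt hnn hmono hA hB hχ hχrank

/-- for a pure state `|ψ⟩` with Schmidt coefficients
`λ₀ ≥ λ₁ ≥ … ≥ λ_{d-1}` (summing to 1), the maximal fidelity `|⟨φ|ψ⟩|²` over unit
vectors `|φ⟩` of Schmidt rank at most `k` equals `∑_{i<k} λᵢ`, and is attained by
`|φ⟩ = (∑_{j<k} λⱼ)^{-1/2} ∑_{i<k} √λᵢ |ii⟩` in the Schmidt bases of `|ψ⟩`. -/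
theorem k_schmidt_fidelity_pure {dA dB d k : ℕ} (hk1 : 1 ≤ k) (hkd : k ≤ d)
    (lam : Fin d → ℝ) (hnn : ∀ i, 0 ≤ lam i) (hmono : Antitone lam)
    (hsum : ∑ i, lam i = 1)
    (eA : Fin d → Fin dA → ℂ) (eB : Fin d → Fin dB → ℂ)
    (honA : ∀ i j, ∑ x, star (eA i x) * eA j x = if i = j then 1 else 0)
    (honB : ∀ i j, ∑ x, star (eB i x) * eB j x = if i = j then 1 else 0)
    (ψ : Fin dA × Fin dB → ℂ)
    (hψ : ψ = fun p => ∑ i, (Real.sqrt (lam i) : ℂ) * eA i p.1 * eB i p.2)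
    (φ : Fin dA × Fin dB → ℂ)
    (hφ : φ = fun p =>
      (1 / (Real.sqrt (∑ j ∈ Finset.univ.filter (fun j : Fin d => (j : ℕ) < k), lam j) : ℂ)) *
        ∑ i ∈ Finset.univ.filter (fun i : Fin d => (i : ℕ) < k),
          (Real.sqrt (lam i) : ℂ) * eA i p.1 * eB i p.2) :
    IsGreatest
      { F : ℝ | ∃ χ : Fin dA × Fin dB → ℂ,
          (∑ p, ‖χ p‖ ^ 2 = 1) ∧ (coeffMat χ).rank ≤ k ∧
          F = ‖∑ p, star (χ p) * ψ p‖ ^ 2 }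
      (∑ i ∈ Finset.univ.filter (fun i : Fin d => (i : ℕ) < k), lam i) ∧
    ‖∑ p, star (φ p) * ψ p‖ ^ 2 =
      ∑ i ∈ Finset.univ.filter (fun i : Fin d => (i : ℕ) < k), lam i :=
  k_schmidt_fidelity_pure_general hk1 lam hnn hmono hsum eA eB honA honB ψ hψ φ hφ
end

section
/- Let ρ^{AB} = ∑_i p_i |ψ_i⟩⟨ψ_i| be any pure-state decomposition of a bipartite density operator ρ^{AB}. Then F_k(ρ^{AB}) ≥ ∑_i p_i F_k(ψ_i), where F_k(σ) = max over states τ in the convex hull of pure states of Schmidt rank at most k of the fidelity F(σ, τ). -/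
open Matrix ComplexOrder

/-- The square root of a positive semidefinite matrix, as `Matrix.PosSemidef.sqrt` was defined
in Mathlib of December 2024 (via the eigendecomposition). -/
noncomputable def posSemidefSqrt {n : Type*} [Fintype n] [DecidableEq n] {A : Matrix n n ℂ}
    (hA : A.PosSemidef) : Matrix n n ℂ :=
  hA.1.eigenvectorUnitary.1 * diagonal ((↑) ∘ (√·) ∘ hA.1.eigenvalues) *
    (star hA.1.eigenvectorUnitary : Matrix n n ℂ)

open Classical in
/-- Fidelity `F(ρ,σ) = (Tr √(√ρ σ √ρ))²` between (positive semidefinite) operators. -/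
noncomputable def fidelity {n : Type*} [Fintype n] [DecidableEq n]
    (ρ σ : Matrix n n ℂ) : ℝ :=
  if h : ρ.PosSemidef ∧ σ.PosSemidef then
    (posSemidefSqrt (h.2.mul_mul_conjTranspose_same (posSemidefSqrt h.1))).trace.re ^ 2
  else 0

/-- `σ` is a convex combination of pure states of Schmidt rank at most `k`
(i.e. `σ ∈ S_k`). -/
def InSchmidtClass {a b : ℕ} (k : ℕ)
    (σ : Matrix (Fin a × Fin b) (Fin a × Fin b) ℂ) : Prop :=
  ∃ (m : ℕ) (q : Fin m → ℝ) (v : Fin m → (Fin a × Fin b → ℂ)),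
    (∀ i, 0 ≤ q i) ∧ (∑ i, q i = 1) ∧
    (∀ i, ∑ p, ‖v i p‖ ^ 2 = 1) ∧
    (∀ i, (coeffMat (v i)).rank ≤ k) ∧
    σ = ∑ i, (q i : ℂ) • outer (v i)

/-- The `k`-Schmidt fidelity `F_k(ρ) = sup_{σ ∈ S_k} F(ρ, σ)`. -/
noncomputable def schmidtFidelity {a b : ℕ} (k : ℕ)
    (ρ : Matrix (Fin a × Fin b) (Fin a × Fin b) ℂ) : ℝ :=
  sSup { x : ℝ | ∃ σ, InSchmidtClass k σ ∧ x = fidelity ρ σ }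

/-!
Choose `σᵢ ∈ S_k` with `F(ψᵢ, σᵢ)` close to `F_k(ψᵢ)` and write `σᵢ = ∑ⱼ qᵢⱼ |φᵢⱼ⟩⟨φᵢⱼ|`.
Since `F(ψ, σ) = ⟨ψ|σ|ψ⟩` for a pure state, `∑ᵢ pᵢ F(ψᵢ, σᵢ) = N := ∑ᵢⱼ pᵢ qᵢⱼ |⟨ψᵢ|φᵢⱼ⟩|²`.
The state `σ* = ∑ᵢⱼ (pᵢ qᵢⱼ |⟨ψᵢ|φᵢⱼ⟩|² / N) |φᵢⱼ⟩⟨φᵢⱼ|` is again in `S_k`, and the purifications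
`∑ᵢⱼ √(pᵢ qᵢⱼ) |ψᵢ⟩|ij⟩` of `ρ` and `∑ᵢⱼ √(pᵢ qᵢⱼ / N) ⟨φᵢⱼ|ψᵢ⟩ |φᵢⱼ⟩|ij⟩` of `σ*` have overlap
`√N`, so Uhlmann's theorem gives `F(ρ, σ*) ≥ N`.

The half of Uhlmann's theorem used here, `Re Tr (M†N) ≤ Tr √(√ρ σ √ρ)` whenever `MM† = ρ` and
`NN† = σ`, follows from polar decompositions `X = √(XX†) K` with `‖K‖ ≤ 1` (operator norm) and
the bound `Re Tr (P D) ≤ ‖D‖ Tr P` for `P ≥ 0`.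
-/

open scoped Matrix.Norms.L2Operator MatrixOrder

namespace Matrix

variable {m n : Type*} [Fintype m] [Fintype n] [DecidableEq n]

lemma norm_apply_le_l2_opNorm (A : Matrix m n ℂ) (i : m) (j : n) : ‖A i j‖ ≤ ‖A‖ := by
  set y := (EuclideanSpace.equiv m ℂ).symm (A *ᵥ EuclideanSpace.single j (1 : ℂ))
  have hy : y i = A i j := by
    simp [y, EuclideanSpace.single]
  calc ‖A i j‖ = ‖y i‖ := by rw [hy]
    _ ≤ ‖y‖ := PiLp.norm_apply_le y i
    _ ≤ ‖A‖ * ‖EuclideanSpace.single j (1 : ℂ)‖ := l2_opNorm_mulVec A _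
    _ = ‖A‖ := by rw [PiLp.norm_single, norm_one, mul_one]

lemma l2_opNorm_mul_mul_le {l p : Type*} [Fintype l] [DecidableEq l] [Fintype p] [DecidableEq p]
    (A : Matrix m n ℂ) (B : Matrix n l ℂ) (C : Matrix l p ℂ) :
    ‖A * B * C‖ ≤ ‖A‖ * ‖B‖ * ‖C‖ :=
  (l2_opNorm_mul _ _).trans (mul_le_mul_of_nonneg_right (l2_opNorm_mul _ _) (norm_nonneg _))

variable [DecidableEq m]

lemma l2_opNorm_le_one_of_conjTranspose_mul_self_eq {P : Matrix n n ℂ} (h : Pᴴ * P = P) :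
    ‖P‖ ≤ 1 := by
  have h' : ‖P‖ * ‖P‖ = ‖P‖ := by rw [← l2_opNorm_conjTranspose_mul_self, h]
  nlinarith [norm_nonneg P]

lemma l2_opNorm_le_one_of_mul_conjTranspose_self_eq {K : Matrix m n ℂ}
    (h : (K * Kᴴ)ᴴ * (K * Kᴴ) = K * Kᴴ) : ‖K‖ ≤ 1 := by
  have hsq : ‖K‖ * ‖K‖ ≤ 1 := by
    rw [← l2_opNorm_conjTranspose K, ← l2_opNorm_conjTranspose_mul_self,
      conjTranspose_conjTranspose]
    exact l2_opNorm_le_one_of_conjTranspose_mul_self_eq h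
  nlinarith [norm_nonneg K]

lemma l2_opNorm_unitary_le_one (U : unitaryGroup n ℂ) : ‖(U : Matrix n n ℂ)‖ ≤ 1 :=
  l2_opNorm_le_one_of_mul_conjTranspose_self_eq <| by
    simp [← star_eq_conjTranspose, mem_unitaryGroup_iff.mp U.2]

lemma PosSemidef.re_trace_mul_le {P : Matrix n n ℂ} (hP : P.PosSemidef) (D : Matrix n n ℂ) :
    (P * D).trace.re ≤ ‖D‖ * P.trace.re := by
  set U := hP.1.eigenvectorUnitary
  set E := (star U : Matrix n n ℂ) * D * U
  have hE : ‖E‖ ≤ ‖D‖ := calc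
    ‖E‖ ≤ ‖(star U : Matrix n n ℂ)‖ * ‖D‖ * ‖(U : Matrix n n ℂ)‖ := l2_opNorm_mul_mul_le _ _ _
    _ ≤ 1 * ‖D‖ * 1 := by
      gcongr
      · exact l2_opNorm_unitary_le_one (star U)
      · exact l2_opNorm_unitary_le_one U
    _ = ‖D‖ := by ring
  have htr : (P * D).trace = ∑ i, (hP.1.eigenvalues i : ℂ) * E i i := by
    conv_lhs => rw [hP.1.spectral_theorem, Unitary.conjStarAlgAut_apply]
    rw [mul_assoc, mul_assoc, trace_mul_comm, mul_assoc, trace]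
    simp only [E, diag_apply, diagonal_mul, Function.comp_apply, mul_assoc]
    rfl
  simp only [htr, hP.1.trace_eq_sum_eigenvalues, Complex.re_sum, Complex.re_ofReal_mul,
    Finset.mul_sum]
  refine Finset.sum_le_sum fun i _ => ?_
  rw [mul_comm ‖D‖]
  exact mul_le_mul_of_nonneg_left (((Complex.re_le_norm _).trans
    (norm_apply_le_l2_opNorm E i i)).trans hE) (hP.eigenvalues_nonneg i)

lemma cfc_mul_cfc (Q : Matrix m m ℂ) (f g : ℝ → ℝ) :
    cfc f Q * cfc g Q = cfc (fun x => f x * g x) Q :=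
  (cfc_mul f g Q (Q.finite_real_spectrum.continuousOn _)
    (Q.finite_real_spectrum.continuousOn _)).symm

lemma cfc_sqrt_mul_inv_sqrt_idem (Q : Matrix m m ℂ) :
    cfc (fun x : ℝ => √x * (√x)⁻¹) Q * cfc (fun x : ℝ => √x * (√x)⁻¹) Q =
      cfc (fun x : ℝ => √x * (√x)⁻¹) Q := by
  rw [cfc_mul_cfc]
  refine cfc_congr fun x _ => ?_
  rcases eq_or_ne (√x) 0 with h | h <;> simp [h]

lemma cfc_inv_sqrt_mul_mul_cfc_inv_sqrt {Q : Matrix m m ℂ} (hQ : 0 ≤ Q) :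
    cfc (fun x : ℝ => (√x)⁻¹) Q * Q * cfc (fun x : ℝ => (√x)⁻¹) Q =
      cfc (fun x : ℝ => √x * (√x)⁻¹) Q := by
  nth_rw 2 [← cfc_id' ℝ Q]
  rw [cfc_mul_cfc, cfc_mul_cfc]
  refine cfc_congr fun x hx => ?_
  have hx : 0 ≤ x := spectrum_nonneg_of_nonneg hQ hx
  rcases eq_or_ne (√x) 0 with h | h
  · simp [h]
  · have := Real.mul_self_sqrt hx
    field_simp
    linarith

lemma cfc_sqrt_mul_inv_sqrt_mul_self {Q : Matrix m m ℂ} (hQ : 0 ≤ Q) :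
    cfc (fun x : ℝ => √x * (√x)⁻¹) Q * Q = Q := by
  nth_rw 2 [← cfc_id' ℝ Q]
  nth_rw 3 [← cfc_id' ℝ Q]
  rw [cfc_mul_cfc]
  refine cfc_congr fun x hx => ?_
  have hx : 0 ≤ x := spectrum_nonneg_of_nonneg hQ hx
  rcases eq_or_ne (√x) 0 with h | h
  · simp [(Real.sqrt_eq_zero hx).mp h]
  · simp [h]

lemma exists_l2_opNorm_le_one_and_sqrt_mul_eq (X : Matrix m n ℂ) :
    ∃ K : Matrix m n ℂ, ‖K‖ ≤ 1 ∧ CFC.sqrt (X * Xᴴ) * K = X := by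
  have hQ : 0 ≤ X * Xᴴ := (posSemidef_self_mul_conjTranspose X).nonneg
  -- Since `0⁻¹ = 0`, `R` is the pseudo-inverse of `√(XX†)` and `P` is the projection onto its
  -- range.
  set R := cfc (fun x : ℝ => (√x)⁻¹) (X * Xᴴ)
  set P := cfc (fun x : ℝ => √x * (√x)⁻¹) (X * Xᴴ)
  have hR : Rᴴ = R := cfc_predicate (fun x : ℝ => (√x)⁻¹) (X * Xᴴ)
  have hP : Pᴴ = P := cfc_predicate (fun x : ℝ => √x * (√x)⁻¹) (X * Xᴴ)
  have hPX : P * X = X := by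
    have h : ((1 - P) * X) * ((1 - P) * X)ᴴ = 0 := by
      rw [conjTranspose_mul, ← Matrix.mul_assoc, Matrix.mul_assoc (1 - P) X, Matrix.sub_mul,
        Matrix.one_mul, cfc_sqrt_mul_inv_sqrt_mul_self hQ, sub_self, Matrix.zero_mul]
    have h' := self_mul_conjTranspose_eq_zero.mp h
    rw [Matrix.sub_mul, Matrix.one_mul, sub_eq_zero] at h'
    exact h'.symm
  refine ⟨R * X, l2_opNorm_le_one_of_mul_conjTranspose_self_eq ?_, ?_⟩
  · have hK : R * X * (R * X)ᴴ = P := by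
      rw [conjTranspose_mul, hR, ← Matrix.mul_assoc, Matrix.mul_assoc R X]
      exact cfc_inv_sqrt_mul_mul_cfc_inv_sqrt hQ
    rw [hK, hP, cfc_sqrt_mul_inv_sqrt_idem]
  · rw [CFC.sqrt_eq_real_sqrt _ hQ, cfcₙ_eq_cfc, ← Matrix.mul_assoc, cfc_mul_cfc]
    exact hPX

lemma re_trace_conjTranspose_mul_le (M N : Matrix n m ℂ) :
    (Mᴴ * N).trace.re ≤
      (CFC.sqrt (CFC.sqrt (M * Mᴴ) * (N * Nᴴ) * CFC.sqrt (M * Mᴴ))).trace.re := by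
  set A := CFC.sqrt (M * Mᴴ)
  set B := CFC.sqrt (N * Nᴴ)
  have hA : Aᴴ = A := (CFC.sqrt_nonneg _).posSemidef.isHermitian
  have hB : Bᴴ = B := (CFC.sqrt_nonneg _).posSemidef.isHermitian
  have hAB : (A * B) * (A * B)ᴴ = A * (N * Nᴴ) * A := by
    rw [conjTranspose_mul, hA, hB, ← mul_assoc, mul_assoc A B B,
      CFC.sqrt_mul_sqrt_self _ (posSemidef_self_mul_conjTranspose N).nonneg]
  obtain ⟨KM, hKM, hM⟩ := exists_l2_opNorm_le_one_and_sqrt_mul_eq M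
  obtain ⟨KN, hKN, hN⟩ := exists_l2_opNorm_le_one_and_sqrt_mul_eq N
  obtain ⟨KT, hKT, hT⟩ := exists_l2_opNorm_le_one_and_sqrt_mul_eq (A * B)
  rw [hAB] at hT
  set S := CFC.sqrt (A * (N * Nᴴ) * A)
  have htr : (Mᴴ * N).trace = (S * (KT * KN * KMᴴ)).trace := by
    have hMN : Mᴴ * N = KMᴴ * (S * KT * KN) := by
      rw [hT, ← hM, ← hN, conjTranspose_mul, hA]
      simp only [A, B, Matrix.mul_assoc]
    rw [hMN, trace_mul_comm]
    simp only [Matrix.mul_assoc]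
  have hD : ‖KT * KN * KMᴴ‖ ≤ 1 := by
    calc ‖KT * KN * KMᴴ‖ ≤ ‖KT‖ * ‖KN‖ * ‖KMᴴ‖ := l2_opNorm_mul_mul_le _ _ _
      _ ≤ 1 * 1 * 1 := by
          rw [l2_opNorm_conjTranspose]
          gcongr
      _ = 1 := by norm_num
  have hS := (CFC.sqrt_nonneg (A * (N * Nᴴ) * A)).posSemidef
  have hS0 : 0 ≤ S.trace.re := (Complex.nonneg_iff.mp hS.trace_nonneg).1
  rw [htr]
  calc _ ≤ ‖KT * KN * KMᴴ‖ * S.trace.re := hS.re_trace_mul_le _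
    _ ≤ 1 * S.trace.re := by gcongr
    _ = S.trace.re := one_mul _

end Matrix

section Fidelity

variable {n : Type*} [Fintype n] [DecidableEq n]

lemma posSemidefSqrt_eq_sqrt {A : Matrix n n ℂ} (hA : A.PosSemidef) :
    posSemidefSqrt hA = CFC.sqrt A := by
  rw [CFC.sqrt_eq_cfc, cfc_nnreal_eq_real _ A, hA.1.cfc_eq, IsHermitian.cfc, posSemidefSqrt,
    Unitary.conjStarAlgAut_apply]
  congr 3
  funext i
  simp [hA.eigenvalues_nonneg i]

lemma fidelity_of_posSemidef {ρ σ : Matrix n n ℂ} (hρ : ρ.PosSemidef) (hσ : σ.PosSemidef) :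
    fidelity ρ σ = (CFC.sqrt (CFC.sqrt ρ * σ * CFC.sqrt ρ)).trace.re ^ 2 := by
  rw [fidelity, dif_pos ⟨hρ, hσ⟩, posSemidefSqrt_eq_sqrt, posSemidefSqrt_eq_sqrt,
    (CFC.sqrt_nonneg ρ).posSemidef.isHermitian]

lemma fidelity_nonneg (ρ σ : Matrix n n ℂ) : 0 ≤ fidelity ρ σ := by
  unfold fidelity
  split_ifs
  exacts [sq_nonneg _, le_rfl]

lemma sq_re_trace_le_fidelity {m : Type*} [Fintype m] [DecidableEq m] (M N : Matrix n m ℂ)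
    (h : 0 ≤ (Mᴴ * N).trace.re) :
    (Mᴴ * N).trace.re ^ 2 ≤ fidelity (M * Mᴴ) (N * Nᴴ) := by
  rw [fidelity_of_posSemidef (posSemidef_self_mul_conjTranspose M)
    (posSemidef_self_mul_conjTranspose N)]
  exact pow_le_pow_left₀ h (re_trace_conjTranspose_mul_le M N) 2

lemma fidelity_le_card_sq_mul_norm_mul_norm {ρ σ : Matrix n n ℂ} (hρ : ρ.PosSemidef)
    (hσ : σ.PosSemidef) :
    fidelity ρ σ ≤ Fintype.card n ^ 2 * (‖ρ‖ * ‖σ‖) := by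
  set A := CFC.sqrt ρ
  set S := CFC.sqrt (A * σ * A)
  have hA : Aᴴ = A := (CFC.sqrt_nonneg ρ).posSemidef.isHermitian
  have hS := (CFC.sqrt_nonneg (A * σ * A)).posSemidef
  have hAσA : 0 ≤ A * σ * A := by
    simpa [hA] using (hσ.mul_mul_conjTranspose_same A).nonneg
  have hnormS : ‖S‖ * ‖S‖ ≤ ‖ρ‖ * ‖σ‖ := calc
    ‖S‖ * ‖S‖ = ‖A * σ * A‖ := by
      rw [← l2_opNorm_conjTranspose_mul_self, hS.isHermitian, CFC.sqrt_mul_sqrt_self _ hAσA]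
    _ ≤ ‖A‖ * ‖σ‖ * ‖A‖ := l2_opNorm_mul_mul_le _ _ _
    _ = ‖ρ‖ * ‖σ‖ := by
      rw [mul_right_comm, ← l2_opNorm_conjTranspose_mul_self, hA,
        CFC.sqrt_mul_sqrt_self ρ hρ.nonneg]
  have htrS : S.trace.re ≤ ‖S‖ * Fintype.card n := by
    simpa using PosSemidef.one.re_trace_mul_le S
  rw [fidelity_of_posSemidef hρ hσ]
  calc S.trace.re ^ 2 ≤ (‖S‖ * Fintype.card n) ^ 2 :=
        pow_le_pow_left₀ (Complex.nonneg_iff.mp hS.trace_nonneg).1 htrS 2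
    _ = Fintype.card n ^ 2 * (‖S‖ * ‖S‖) := by ring
    _ ≤ Fintype.card n ^ 2 * (‖ρ‖ * ‖σ‖) := by gcongr

end Fidelity

section Outer

variable {n : Type*} [Fintype n]

lemma outer_posSemidef (v : n → ℂ) : (outer v).PosSemidef := posSemidef_vecMulVec_self_star v

lemma outer_smul (z : ℂ) (v : n → ℂ) : outer (z • v) = ((‖z‖ ^ 2 : ℝ) : ℂ) • outer v := by
  rw [outer, star_smul, smul_vecMulVec, vecMulVec_smul, smul_smul, RCLike.star_def,
    Complex.mul_conj', outer, Complex.ofReal_pow]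

lemma outer_mul_mul_outer (v : n → ℂ) (σ : Matrix n n ℂ) :
    outer v * σ * outer v = (star v ⬝ᵥ (σ *ᵥ v)) • outer v := by
  rw [outer, vecMulVec_mul, vecMulVec_mul_vecMulVec, vecMulVec_smul, ← dotProduct_mulVec]

lemma trace_outer (v : n → ℂ) : (outer v).trace = star v ⬝ᵥ v := by
  rw [outer, trace_vecMulVec, dotProduct_comm]

lemma star_dotProduct_self_eq_one {v : n → ℂ} (hv : ∑ i, ‖v i‖ ^ 2 = 1) : star v ⬝ᵥ v = 1 := by
  simp [dotProduct, Complex.conj_mul', ← Complex.ofReal_pow, ← Complex.ofReal_sum, hv]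

lemma outer_mul_outer {v : n → ℂ} (hv : star v ⬝ᵥ v = 1) : outer v * outer v = outer v := by
  rw [outer, vecMulVec_mul_vecMulVec, hv, one_smul]

lemma star_dotProduct_outer_mulVec (ψ φ : n → ℂ) :
    star ψ ⬝ᵥ (outer φ *ᵥ ψ) = ((‖star ψ ⬝ᵥ φ‖ ^ 2 : ℝ) : ℂ) := by
  have h : star φ ⬝ᵥ ψ = starRingEnd ℂ (star ψ ⬝ᵥ φ) := by
    simp [dotProduct, mul_comm]
  rw [outer, vecMulVec_mulVec, dotProduct_smul, MulOpposite.smul_eq_mul_unop,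
    MulOpposite.unop_op, h, Complex.mul_conj', Complex.ofReal_pow]

lemma posSemidef_sum_smul_outer {γ : Type*} [Fintype γ] {q : γ → ℝ} (hq : ∀ c, 0 ≤ q c)
    (v : γ → n → ℂ) : (∑ c, (q c : ℂ) • outer (v c)).PosSemidef :=
  posSemidef_sum _ fun c _ => (outer_posSemidef _).smul (Complex.zero_le_real.mpr (hq c))

lemma sum_outer_eq_mul_conjTranspose {γ : Type*} [Fintype γ] (f : γ → n → ℂ) :
    ∑ c, outer (f c) = of (fun x c => f c x) * (of fun x c => f c x)ᴴ := by
  ext x y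
  simp [outer, mul_apply, Matrix.sum_apply, vecMulVec_apply]

lemma trace_conjTranspose_of_mul_of {γ : Type*} [Fintype γ] (f g : γ → n → ℂ) :
    ((of fun x c => f c x)ᴴ * of fun x c => g c x).trace = ∑ c, star (f c) ⬝ᵥ g c := by
  simp [trace, mul_apply, dotProduct]

variable [DecidableEq n]

lemma fidelity_outer {ψ : n → ℂ} (hψ : star ψ ⬝ᵥ ψ = 1) {σ : Matrix n n ℂ}
    (hσ : σ.PosSemidef) : fidelity (outer ψ) σ = (star ψ ⬝ᵥ (σ *ᵥ ψ)).re := by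
  set P := outer ψ
  set r := (star ψ ⬝ᵥ (σ *ᵥ ψ)).re
  have hP : 0 ≤ P := (outer_posSemidef ψ).nonneg
  have hr : 0 ≤ r := (Complex.nonneg_iff.mp (hσ.dotProduct_mulVec_nonneg ψ)).1
  have hPP : P * P = P := outer_mul_outer hψ
  have hPσP : P * σ * P = r • P := by
    rw [outer_mul_mul_outer, Complex.eq_re_of_ofReal_le (hσ.dotProduct_mulVec_nonneg ψ),
      Complex.coe_smul]
  have hsqrt : CFC.sqrt (r • P) = √r • P := CFC.sqrt_unique (by
    rw [smul_mul_smul_comm, hPP, Real.mul_self_sqrt hr]) (smul_nonneg (Real.sqrt_nonneg r) hP)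
  rw [fidelity_of_posSemidef (outer_posSemidef ψ) hσ, CFC.sqrt_unique hPP, hPσP, hsqrt,
    trace_smul, trace_outer, hψ]
  simp [Real.sq_sqrt hr]

lemma norm_outer_le_one {v : n → ℂ} (hv : star v ⬝ᵥ v = 1) : ‖outer v‖ ≤ 1 :=
  l2_opNorm_le_one_of_conjTranspose_mul_self_eq <| by
    rw [(outer_posSemidef v).isHermitian, outer_mul_outer hv]

lemma sq_re_sum_dotProduct_le_fidelity {γ : Type*} [Fintype γ] [DecidableEq γ] (f g : γ → n → ℂ)
    (h : 0 ≤ (∑ c, star (f c) ⬝ᵥ g c).re) :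
    (∑ c, star (f c) ⬝ᵥ g c).re ^ 2 ≤ fidelity (∑ c, outer (f c)) (∑ c, outer (g c)) := by
  rw [← trace_conjTranspose_of_mul_of] at h ⊢
  rw [sum_outer_eq_mul_conjTranspose, sum_outer_eq_mul_conjTranspose]
  exact sq_re_trace_le_fidelity _ _ h

lemma le_fidelity_of_sum_mul_norm_sq_eq {γ : Type*} [Fintype γ] [DecidableEq γ] {w : γ → ℝ}
    (hw : ∀ c, 0 ≤ w c) (ψ φ : γ → n → ℂ) {N : ℝ}
    (hN_eq : ∑ c, w c * ‖star (ψ c) ⬝ᵥ φ c‖ ^ 2 = N) (hN : 0 < N) :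
    N ≤ fidelity (∑ c, (w c : ℂ) • outer (ψ c))
      (∑ c, ((w c * ‖star (ψ c) ⬝ᵥ φ c‖ ^ 2 / N : ℝ) : ℂ) • outer (φ c)) := by
  set t := fun c => star (ψ c) ⬝ᵥ φ c
  set f := fun c => (√(w c) : ℂ) • ψ c
  set g := fun c => ((√(w c) / √N : ℝ) * star (t c)) • φ c
  have hf (c : γ) : outer (f c) = (w c : ℂ) • outer (ψ c) := by
    rw [outer_smul, Complex.norm_real, Real.norm_of_nonneg (Real.sqrt_nonneg _),
      Real.sq_sqrt (hw c)]
  have hg (c : γ) : outer (g c) = ((w c * ‖t c‖ ^ 2 / N : ℝ) : ℂ) • outer (φ c) := by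
    rw [outer_smul, norm_mul, Complex.norm_real, norm_star, Real.norm_of_nonneg (by positivity),
      mul_pow, div_pow, Real.sq_sqrt (hw c), Real.sq_sqrt hN.le, div_mul_eq_mul_div]
  have hfg : ∑ c, star (f c) ⬝ᵥ g c = (√N : ℂ) := by
    have h (c : γ) : star (f c) ⬝ᵥ g c = ((w c * ‖t c‖ ^ 2 / √N : ℝ) : ℂ) := by
      have e1 : starRingEnd ℂ (t c) * t c = (‖t c‖ : ℂ) ^ 2 := Complex.conj_mul' (t c)
      have e2 : (√(w c) : ℂ) * √(w c) = w c := by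
        rw [← Complex.ofReal_mul, Real.mul_self_sqrt (hw c)]
      simp only [f, g, star_smul, smul_dotProduct, dotProduct_smul, smul_eq_mul, RCLike.star_def,
        Complex.conj_ofReal]
      push_cast
      linear_combination (√(w c) * √(w c) / √N : ℂ) * e1 + ((‖t c‖ : ℂ) ^ 2 / √N) * e2
    simp only [h, ← Complex.ofReal_sum, ← Finset.sum_div]
    rw [hN_eq, Real.div_sqrt]
  have key := sq_re_sum_dotProduct_le_fidelity f g (by rw [hfg, Complex.ofReal_re]; positivity)
  rwa [hfg, Complex.ofReal_re, Real.sq_sqrt hN.le, Finset.sum_congr rfl fun c _ => hf c,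
    Finset.sum_congr rfl fun c _ => hg c] at key

lemma fidelity_outer_sum_smul_outer {ψ : n → ℂ} (hψ : star ψ ⬝ᵥ ψ = 1) {γ : Type*} [Fintype γ]
    {q : γ → ℝ} (hq : ∀ c, 0 ≤ q c) (φ : γ → n → ℂ) :
    fidelity (outer ψ) (∑ c, (q c : ℂ) • outer (φ c)) = ∑ c, q c * ‖star ψ ⬝ᵥ φ c‖ ^ 2 := by
  rw [fidelity_outer hψ (posSemidef_sum_smul_outer hq φ), sum_mulVec, dotProduct_sum,
    Complex.re_sum]
  refine Finset.sum_congr rfl fun c _ => ?_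
  rw [smul_mulVec, dotProduct_smul, smul_eq_mul, star_dotProduct_outer_mulVec,
    ← Complex.ofReal_mul, Complex.ofReal_re]

end Outer

section SchmidtFidelity

variable {a b k : ℕ}

lemma InSchmidtClass.posSemidef {σ : Matrix (Fin a × Fin b) (Fin a × Fin b) ℂ}
    (hσ : InSchmidtClass k σ) : σ.PosSemidef := by
  obtain ⟨m, q, v, hq, -, -, -, rfl⟩ := hσ
  exact posSemidef_sum_smul_outer hq v

lemma InSchmidtClass.norm_le_one {σ : Matrix (Fin a × Fin b) (Fin a × Fin b) ℂ}
    (hσ : InSchmidtClass k σ) : ‖σ‖ ≤ 1 := by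
  obtain ⟨m, q, v, hq, hqs, hv, -, rfl⟩ := hσ
  calc ‖∑ i, (q i : ℂ) • outer (v i)‖ ≤ ∑ i, ‖(q i : ℂ) • outer (v i)‖ := norm_sum_le _ _
    _ ≤ ∑ i, q i := Finset.sum_le_sum fun i _ => by
        rw [norm_smul, Complex.norm_real, Real.norm_of_nonneg (hq i)]
        exact mul_le_of_le_one_right (hq i)
          (norm_outer_le_one (star_dotProduct_self_eq_one (hv i)))
    _ = 1 := hqs

lemma inSchmidtClass_sum {γ : Type*} [Fintype γ] {q : γ → ℝ} {v : γ → Fin a × Fin b → ℂ}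
    (hq : ∀ c, 0 ≤ q c) (hqs : ∑ c, q c = 1) (hv : ∀ c, ∑ x, ‖v c x‖ ^ 2 = 1)
    (hrank : ∀ c, (coeffMat (v c)).rank ≤ k) :
    InSchmidtClass k (∑ c, (q c : ℂ) • outer (v c)) := by
  let e := (Fintype.equivFin γ).symm
  refine ⟨Fintype.card γ, q ∘ e, v ∘ e, fun i => hq _, (Equiv.sum_comp e q).trans hqs,
    fun i => hv _, fun i => hrank _, ?_⟩
  exact (Equiv.sum_comp e fun c => (q c : ℂ) • outer (v c)).symm

lemma bddAbove_fidelity_inSchmidtClass {ρ : Matrix (Fin a × Fin b) (Fin a × Fin b) ℂ}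
    (hρ : ρ.PosSemidef) : BddAbove {x | ∃ σ, InSchmidtClass k σ ∧ x = fidelity ρ σ} := by
  refine ⟨Fintype.card (Fin a × Fin b) ^ 2 * ‖ρ‖, ?_⟩
  rintro _ ⟨σ, hσ, rfl⟩
  calc fidelity ρ σ ≤ Fintype.card (Fin a × Fin b) ^ 2 * (‖ρ‖ * ‖σ‖) :=
        fidelity_le_card_sq_mul_norm_mul_norm hρ hσ.posSemidef
    _ ≤ Fintype.card (Fin a × Fin b) ^ 2 * (‖ρ‖ * 1) := by gcongr; exact hσ.norm_le_one
    _ = _ := by rw [mul_one]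

lemma fidelity_le_schmidtFidelity {ρ σ : Matrix (Fin a × Fin b) (Fin a × Fin b) ℂ}
    (hρ : ρ.PosSemidef) (hσ : InSchmidtClass k σ) : fidelity ρ σ ≤ schmidtFidelity k ρ :=
  le_csSup (bddAbove_fidelity_inSchmidtClass hρ) ⟨σ, hσ, rfl⟩

lemma schmidtFidelity_nonneg (ρ : Matrix (Fin a × Fin b) (Fin a × Fin b) ℂ) :
    0 ≤ schmidtFidelity k ρ :=
  Real.sSup_nonneg <| by
    rintro _ ⟨σ, -, rfl⟩
    exact fidelity_nonneg ρ σ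

lemma schmidtFidelity_eq_zero (h : ∀ σ : Matrix (Fin a × Fin b) (Fin a × Fin b) ℂ,
    ¬InSchmidtClass k σ) (ρ : Matrix (Fin a × Fin b) (Fin a × Fin b) ℂ) :
    schmidtFidelity k ρ = 0 := by
  simp [schmidtFidelity, h]

lemma exists_schmidtFidelity_le_fidelity_add {σ₀ : Matrix (Fin a × Fin b) (Fin a × Fin b) ℂ}
    (hσ₀ : InSchmidtClass k σ₀) (ρ : Matrix (Fin a × Fin b) (Fin a × Fin b) ℂ) {ε : ℝ}
    (hε : 0 < ε) : ∃ σ, InSchmidtClass k σ ∧ schmidtFidelity k ρ ≤ fidelity ρ σ + ε := by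
  obtain ⟨_, ⟨σ, hσ, rfl⟩, hlt⟩ := exists_lt_of_lt_csSup
    (⟨_, σ₀, hσ₀, rfl⟩ : {x | ∃ σ, InSchmidtClass k σ ∧ x = fidelity ρ σ}.Nonempty)
    (sub_lt_self (schmidtFidelity k ρ) hε)
  exact ⟨σ, hσ, by linarith⟩

lemma sum_mul_fidelity_outer_le_schmidtFidelity {ι : Type*} [Fintype ι] {p : ι → ℝ}
    (hp : ∀ i, 0 ≤ p i) {ψ : ι → Fin a × Fin b → ℂ} (hψ : ∀ i, star (ψ i) ⬝ᵥ ψ i = 1)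
    {σ : ι → Matrix (Fin a × Fin b) (Fin a × Fin b) ℂ} (hσ : ∀ i, InSchmidtClass k (σ i)) :
    ∑ i, p i * fidelity (outer (ψ i)) (σ i) ≤ schmidtFidelity k (∑ i, (p i : ℂ) • outer (ψ i)) := by
  classical
  choose m q φ hq hqs hφ hrank hσ_eq using hσ
  set w : (Σ i, Fin (m i)) → ℝ := fun c => p c.1 * q c.1 c.2
  have hw c : 0 ≤ w c := mul_nonneg (hp c.1) (hq c.1 c.2)
  have hfid : ∑ i, p i * fidelity (outer (ψ i)) (σ i) =
      ∑ c, w c * ‖star (ψ c.1) ⬝ᵥ φ c.1 c.2‖ ^ 2 := by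
    simp only [hσ_eq, fidelity_outer_sum_smul_outer (hψ _) (hq _), Fintype.sum_sigma,
      Finset.mul_sum, w, mul_assoc]
  have hρ : ∑ i, (p i : ℂ) • outer (ψ i) = ∑ c, (w c : ℂ) • outer (ψ c.1) := by
    simp only [Fintype.sum_sigma, w, Complex.ofReal_mul, mul_smul, ← Finset.smul_sum,
      ← Finset.sum_smul, ← Complex.ofReal_sum, hqs, Complex.ofReal_one, one_smul]
  set N := ∑ c, w c * ‖star (ψ c.1) ⬝ᵥ φ c.1 c.2‖ ^ 2 with hN_eq
  rw [hfid, hρ]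
  rcases (Finset.sum_nonneg fun c _ => mul_nonneg (hw c) (sq_nonneg _) : 0 ≤ N).eq_or_lt
    with hN | hN
  · exact hN.symm.le.trans (schmidtFidelity_nonneg _)
  · refine (le_fidelity_of_sum_mul_norm_sq_eq hw _ _ hN_eq.symm hN).trans
      (fidelity_le_schmidtFidelity (posSemidef_sum_smul_outer hw _) (inSchmidtClass_sum ?_ ?_
        (fun c => hφ c.1 c.2) (fun c => hrank c.1 c.2)))
    · exact fun c => div_nonneg (mul_nonneg (hw c) (sq_nonneg _)) hN.le
    · rw [← Finset.sum_div, div_self hN.ne']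

end SchmidtFidelity

/-- for any pure-state decomposition `ρ = ∑ pᵢ |ψᵢ⟩⟨ψᵢ|` of a bipartite
density operator, `F_k(ρ) ≥ ∑ pᵢ F_k(ψᵢ)`. -/
theorem schmidtFidelity_ge_avg {a b k : ℕ} {ι : Type} [Fintype ι]
    (ρ : Matrix (Fin a × Fin b) (Fin a × Fin b) ℂ)
    (p : ι → ℝ) (ψ : ι → (Fin a × Fin b → ℂ))
    (hp : ∀ i, 0 ≤ p i) (hps : ∑ i, p i = 1)
    (hunit : ∀ i, ∑ q, ‖ψ i q‖ ^ 2 = 1)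
    (hdecomp : ρ = ∑ i, (p i : ℂ) • outer (ψ i)) :
    schmidtFidelity k ρ ≥ ∑ i, p i * schmidtFidelity k (outer (ψ i)) := by
  have hψ i : star (ψ i) ⬝ᵥ ψ i = 1 := star_dotProduct_self_eq_one (hunit i)
  by_cases hS : ∃ σ₀ : Matrix (Fin a × Fin b) (Fin a × Fin b) ℂ, InSchmidtClass k σ₀
  · obtain ⟨σ₀, hσ₀⟩ := hS
    refine le_of_forall_pos_le_add fun ε hε => ?_
    choose σ hσ hσε using fun i =>
      exists_schmidtFidelity_le_fidelity_add hσ₀ (outer (ψ i)) hε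
    calc ∑ i, p i * schmidtFidelity k (outer (ψ i))
        ≤ ∑ i, p i * (fidelity (outer (ψ i)) (σ i) + ε) := by
          gcongr with i
          exacts [hp i, hσε i]
      _ = ∑ i, p i * fidelity (outer (ψ i)) (σ i) + ε := by
          simp only [mul_add, Finset.sum_add_distrib, ← Finset.sum_mul, hps, one_mul]
      _ ≤ schmidtFidelity k ρ + ε := by
          rw [hdecomp]
          gcongr
          exact sum_mul_fidelity_outer_le_schmidtFidelity hp hψ hσ
  · rw [not_exists] at hS
    simp [schmidtFidelity_eq_zero hS]
end

section
/- Let κ ∈ (0,1) satisfy κ ≤ 1 − e^{−γm} with γ = −ln p > 0 for p ∈ (0,1). If the entanglement survival condition (1 − e^{−γm})^{n/(2(k−1))} (√k − 1) > ε holds for some ε ∈ (0,1) with √k − 1 > ε, then m ≥ (ln n)/γ + (1/γ) ln(1/(2β(k−1))), where β = −ln(ε/(√k − 1)) > 0. -/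
/-- from the entanglement survival condition for a chain of length `n`
with `m` parallel depolarizing channels (parameter `p`), the number of channels must
satisfy `m ≥ (ln n)/γ + (1/γ) ln(1/(2β(k-1)))`. -/
theorem parallel_channels_scaling (p : ℝ) (hp0 : 0 < p) (hp1 : p < 1)
    (γ : ℝ) (hγ : γ = -Real.log p)
    (m n k : ℕ) (hm : 1 ≤ m) (hn : 1 ≤ n) (hk : 2 ≤ k)
    (ε : ℝ) (hε0 : 0 < ε) (hε1 : ε < 1) (hεk : ε < Real.sqrt k - 1)
    (β : ℝ) (hβ : β = -Real.log (ε / (Real.sqrt k - 1)))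
    (κ : ℝ) (hκ0 : 0 < κ) (hκ1 : κ < 1)
    (hκm : κ ≤ 1 - Real.exp (-γ * m))
    (hsurv : (1 - Real.exp (-γ * m)) ^ ((n : ℝ) / (2 * ((k : ℝ) - 1))) *
      (Real.sqrt k - 1) > ε) :
    (m : ℝ) ≥ Real.log n / γ + (1 / γ) * Real.log (1 / (2 * β * ((k : ℝ) - 1))) := by
  have hγ0 : 0 < γ := by
    have := Real.log_neg hp0 hp1; rw [hγ]; linarith
  have hm1 : (1:ℝ) ≤ (m:ℝ) := by exact_mod_cast hm
  have hn1 : (1:ℝ) ≤ (n:ℝ) := by exact_mod_cast hn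
  have hk1 : (1:ℝ) ≤ (k:ℝ) - 1 := by
    have : (2:ℝ) ≤ (k:ℝ) := by exact_mod_cast hk
    linarith
  set x := Real.exp (-γ * m) with hxdef
  have hx0 : 0 < x := Real.exp_pos _
  have hx1 : x < 1 := by
    apply Real.exp_lt_one_iff.mpr
    nlinarith
  have hs0 : 0 < Real.sqrt k - 1 := lt_trans hε0 hεk
  have hrat0 : 0 < ε / (Real.sqrt k - 1) := div_pos hε0 hs0
  have hrat1 : ε / (Real.sqrt k - 1) < 1 := (div_lt_one hs0).mpr hεk
  have hβ0 : 0 < β := by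
    have := Real.log_neg hrat0 hrat1; rw [hβ]; linarith
  set e := (n : ℝ) / (2 * ((k : ℝ) - 1)) with hedef
  have he0 : 0 < e := by positivity
  -- from hsurv: (1-x)^e > ε/(√k-1)
  have h1 : ε / (Real.sqrt k - 1) < (1 - x) ^ e := by
    rw [div_lt_iff₀ hs0]; exact hsurv
  have h1x : 0 < 1 - x := by linarith
  -- logs
  have h2 : -β < e * Real.log (1 - x) := by
    have := Real.log_lt_log hrat0 h1
    rw [Real.log_rpow h1x] at this
    rw [hβ, neg_neg]; exact this
  have h3 : Real.log (1 - x) ≤ -x := by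
    have := Real.log_le_sub_one_of_pos h1x; linarith
  have h4 : e * x < β := by nlinarith
  -- x < 2β(k-1)/n, i.e. n*x < 2β(k-1)
  have h5 : (n : ℝ) * x < 2 * β * ((k:ℝ) - 1) := by
    have hkpos : (0:ℝ) < 2 * ((k:ℝ) - 1) := by linarith
    have := (div_lt_iff₀ hkpos).mp ((lt_div_iff₀ hx0).mpr  h4)
    -- h4 : e * x < β  with e = n/(2(k-1)); multiply out
    rw [hedef] at h4
    rw [div_mul_eq_mul_div, div_lt_iff₀ hkpos] at h4
    nlinarith
  have hnx0 : 0 < (n:ℝ) * x := by positivity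
  have h6 : Real.log ((n:ℝ) * x) < Real.log (2 * β * ((k:ℝ) - 1)) :=
    Real.log_lt_log hnx0 h5
  rw [Real.log_mul (by linarith) (ne_of_gt hx0), hxdef, Real.log_exp] at h6
  -- h6 : log n + (-γ * m) < log (2β(k-1))
  have hlog : Real.log (1 / (2 * β * ((k:ℝ) - 1))) = -Real.log (2 * β * ((k:ℝ) - 1)) := by
    rw [one_div, Real.log_inv]
  have h7 : (Real.log n - Real.log (2 * β * ((k:ℝ) - 1))) / γ ≤ (m:ℝ) := by
    rw [div_le_iff₀ hγ0]
    linarith [h6, mul_comm (m:ℝ) γ]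
  have h8 : Real.log n / γ + (1 / γ) * -Real.log (2 * β * ((k:ℝ) - 1))
      = (Real.log n - Real.log (2 * β * ((k:ℝ) - 1))) / γ := by ring
  rw [ge_iff_le, hlog, h8]
  exact h7
end
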